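/- arXiv:1203.5077 — 5 statements merged into one kernel-verified Lean document; each statement's English description precedes it below -/
import Mathlib

section
/- Let (A, Δ_0, Δ_1, Δ_2, …) be a multicomplex and let (p, i, h) be a homotopy retract of the chain complex (A, d = Δ_0) onto a chain complex (H, d_H). Then the transferred operators Δ′_n := Σ_{k≥1} Σ_{i_1+⋯+i_k = n, i_j ≥ 1} p Δ_{i_1} h Δ_{i_2} h ⋯ h Δ_{i_k} i (for n ≥ 1), together with Δ′_0 := d_H, define a multicomplex structure on H; that is, Σ_{i=0}^{n} Δ′_i Δ′_{n−i} = 0 for all n ≥ 0. -/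
open Module LinearMap Finset

variable (𝕜 : Type) [Field 𝕜] [CharZero 𝕜]

/-- A linear map `f` between graded vector spaces has degree `m` with respect to the
gradings `𝒜` and `ℬ` : it maps the piece of degree `j` into the piece of degree `j + m`. -/
def HasDeg {A B : Type} [AddCommGroup A] [Module 𝕜 A] [AddCommGroup B] [Module 𝕜 B]
    (𝒜 : ℤ → Submodule 𝕜 A) (ℬ : ℤ → Submodule 𝕜 B) (f : A →ₗ[𝕜] B) (m : ℤ) : Prop :=
  ∀ j : ℤ, (𝒜 j).map f ≤ ℬ (j + m)

/-- A multicomplex structure on a graded vector space `(A, 𝒜)` : a family of operators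
`Δ n` of degree `2n - 1` satisfying `∑_{i=0}^{n} Δ_i Δ_{n-i} = 0` for all `n ≥ 0`. -/
def IsMulticomplex {A : Type} [AddCommGroup A] [Module 𝕜 A]
    (𝒜 : ℤ → Submodule 𝕜 A) (Δ : ℕ → Module.End 𝕜 A) : Prop :=
  (∀ n : ℕ, HasDeg 𝕜 𝒜 𝒜 (Δ n) (2 * (n : ℤ) - 1)) ∧
  (∀ n : ℕ, ∑ i ∈ Finset.range (n + 1), Δ i ∘ₗ Δ (n - i) = 0)

/-- A chain map `i : (H, dH) → (A, dA)` is a quasi-isomorphism: the induced map on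
homology is injective and surjective. -/
def IsQuasiIso {H A : Type} [AddCommGroup H] [Module 𝕜 H] [AddCommGroup A] [Module 𝕜 A]
    (dH : Module.End 𝕜 H) (dA : Module.End 𝕜 A) (i : H →ₗ[𝕜] A) : Prop :=
  (∀ x ∈ LinearMap.ker dH, i x ∈ LinearMap.range dA → x ∈ LinearMap.range dH) ∧
  (∀ y ∈ LinearMap.ker dA, ∃ x ∈ LinearMap.ker dH, y - i x ∈ LinearMap.range dA)

/-- A homotopy retract of the chain complex `(A, dA)` onto the chain complex `(H, dH)`:
chain maps `p, i` of degree `0`, with `i` a quasi-isomorphism, and a degree `1` homotopy `h`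
with `i p - id = dA h + h dA`. -/
def IsHomotopyRetract {A H : Type} [AddCommGroup A] [Module 𝕜 A] [AddCommGroup H] [Module 𝕜 H]
    (𝒜 : ℤ → Submodule 𝕜 A) (ℋ : ℤ → Submodule 𝕜 H)
    (dA : Module.End 𝕜 A) (dH : Module.End 𝕜 H)
    (p : A →ₗ[𝕜] H) (i : H →ₗ[𝕜] A) (h : Module.End 𝕜 A) : Prop :=
  HasDeg 𝕜 𝒜 ℋ p 0 ∧ HasDeg 𝕜 ℋ 𝒜 i 0 ∧ HasDeg 𝕜 𝒜 𝒜 h 1 ∧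
  p ∘ₗ dA = dH ∘ₗ p ∧ i ∘ₗ dH = dA ∘ₗ i ∧
  IsQuasiIso 𝕜 dH dA i ∧
  i ∘ₗ p - LinearMap.id = dA ∘ₗ h + h ∘ₗ dA

/-- The word `Δ_{i₁} h Δ_{i₂} h ⋯ h Δ_{i_k}` associated to a list `[i₁, …, i_k]`. -/
def mcWord {A : Type} [AddCommGroup A] [Module 𝕜 A]
    (Δ : ℕ → Module.End 𝕜 A) (h : Module.End 𝕜 A) : List ℕ → Module.End 𝕜 A
  | [] => 1
  | [n] => Δ n
  | n :: m :: rest => Δ n * h * mcWord Δ h (m :: rest)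

/-- The transferred operators `Δ'_0 := d_H` and, for `n ≥ 1`,
`Δ'_n := ∑_{i₁+⋯+i_k = n, i_j ≥ 1} p Δ_{i₁} h Δ_{i₂} h ⋯ h Δ_{i_k} i`. -/
noncomputable def transferredDelta {A H : Type} [AddCommGroup A] [Module 𝕜 A]
    [AddCommGroup H] [Module 𝕜 H]
    (Δ : ℕ → Module.End 𝕜 A) (h : Module.End 𝕜 A)
    (p : A →ₗ[𝕜] H) (i : H →ₗ[𝕜] A) (dH : Module.End 𝕜 H) : ℕ → Module.End 𝕜 H
  | 0 => dH
  | n + 1 => ∑ c : Composition (n + 1), p ∘ₗ mcWord 𝕜 Δ h c.blocks ∘ₗ i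

/-- An `∞`-morphism of multicomplexes `(A, Δ) ⇝ (B, Δ')` : a family of maps `f n` of
degree `2n` with `∑_{k+l=n} f_k Δ_l = ∑_{k+l=n} Δ'_k f_l` for all `n ≥ 0`. -/
def IsInftyMorphism {A B : Type} [AddCommGroup A] [Module 𝕜 A] [AddCommGroup B] [Module 𝕜 B]
    (𝒜 : ℤ → Submodule 𝕜 A) (ℬ : ℤ → Submodule 𝕜 B)
    (Δ : ℕ → Module.End 𝕜 A) (Δ' : ℕ → Module.End 𝕜 B)
    (f : ℕ → (A →ₗ[𝕜] B)) : Prop :=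
  (∀ n : ℕ, HasDeg 𝕜 𝒜 ℬ (f n) (2 * (n : ℤ))) ∧
  (∀ n : ℕ, ∑ k ∈ Finset.range (n + 1), f k ∘ₗ Δ (n - k) =
            ∑ k ∈ Finset.range (n + 1), Δ' k ∘ₗ f (n - k))

/-- The coefficients `E_n` of `e^{R(z)}` for `R(z) = ∑_{n ≥ 1} R_n zⁿ` :
`E_0 = id` and `E_n = ∑_{k ≥ 1} (1/k!) ∑_{i₁+⋯+i_k=n, i_j ≥ 1} R_{i₁} ⋯ R_{i_k}`. -/
noncomputable def expCoeff {A : Type} [AddCommGroup A] [Module 𝕜 A]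
    (R : ℕ → Module.End 𝕜 A) : ℕ → Module.End 𝕜 A
  | 0 => 1
  | n + 1 => ∑ c : Composition (n + 1), ((Nat.factorial c.length : 𝕜)⁻¹) • (c.blocks.map R).prod

namespace HTTaux
set_option linter.unusedSectionVars false

variable {𝕜}
variable {A : Type} [AddCommGroup A] [Module 𝕜 A]

lemma mcWord_cons (Δ : ℕ → Module.End 𝕜 A) (h : Module.End 𝕜 A) (a : ℕ) (t : List ℕ)
    (ht : t ≠ []) : mcWord 𝕜 Δ h (a :: t) = Δ a * h * mcWord 𝕜 Δ h t := by
  cases t with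
  | nil => exact absurd rfl ht
  | cons b r => rfl

/-- the finset of all composition-block-lists of `m` -/
noncomputable def Pset (m : ℕ) : Finset (List ℕ) :=
  Finset.image (Composition.blocks (n := m)) Finset.univ

lemma mem_Pset {m : ℕ} {l : List ℕ} :
    l ∈ Pset m ↔ l.sum = m ∧ ∀ x ∈ l, 0 < x := by
  constructor
  · rintro hl
    simp only [Pset, Finset.mem_image] at hl
    obtain ⟨c, -, rfl⟩ := hl
    exact ⟨c.blocks_sum, fun x hx => c.blocks_pos hx⟩
  · rintro ⟨h1, h2⟩
    simp only [Pset, Finset.mem_image]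
    exact ⟨⟨l, fun hx => h2 _ hx, h1⟩, Finset.mem_univ _, rfl⟩

lemma sum_comp {M : Type} [AddCommMonoid M] (m : ℕ) (f : List ℕ → M) :
    ∑ c : Composition m, f c.blocks = ∑ l ∈ Pset m, f l := by
  rw [Pset, Finset.sum_image]
  intro c1 _ c2 _ hc
  exact Composition.ext hc

lemma Pset_zero : Pset 0 = {([] : List ℕ)} := by
  ext l
  simp only [mem_Pset, Finset.mem_singleton]
  constructor
  · rintro ⟨h1, h2⟩
    cases l with
    | nil => rfl
    | cons a t =>
      exfalso
      have ha : 0 < a := h2 a List.mem_cons_self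
      have : a + t.sum = 0 := by simpa using h1
      omega
  · rintro rfl
    exact ⟨rfl, by simp⟩

lemma Pset_succ (n : ℕ) :
    Pset (n + 1) =
      (Finset.range (n + 1)).biUnion (fun b => (Pset b).image (fun t => (n + 1 - b) :: t)) := by
  ext l
  simp only [mem_Pset, Finset.mem_biUnion, Finset.mem_image, Finset.mem_range]
  constructor
  · rintro ⟨h1, h2⟩
    cases l with
    | nil => simp at h1
    | cons a t =>
      have ha : 0 < a := h2 a List.mem_cons_self
      have hsum : a + t.sum = n + 1 := by simpa using h1
      refine ⟨t.sum, by omega, t, ⟨rfl, fun x hx => h2 x (List.mem_cons_of_mem a hx)⟩, ?_⟩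
      congr 1
      omega
  · rintro ⟨b, hb, t, ⟨ht1, ht2⟩, rfl⟩
    constructor
    · simp [ht1]; omega
    · intro x hx
      rcases List.mem_cons.mp hx with rfl | hx
      · omega
      · exact ht2 x hx

noncomputable def mcD (Δ : ℕ → Module.End 𝕜 A) (n : ℕ) : Module.End 𝕜 A :=
  if n = 0 then 0 else Δ n

noncomputable def mcCS (Δ : ℕ → Module.End 𝕜 A) (h : Module.End 𝕜 A) (n : ℕ) :
    Module.End 𝕜 A :=
  if n = 0 then 0 else ∑ c : Composition n, mcWord 𝕜 Δ h c.blocks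

lemma mcCS_zero (Δ : ℕ → Module.End 𝕜 A) (h : Module.End 𝕜 A) : mcCS Δ h 0 = 0 := rfl

lemma mcWord_single (Δ : ℕ → Module.End 𝕜 A) (h : Module.End 𝕜 A) (a : ℕ) :
    mcWord 𝕜 Δ h [a] = Δ a := rfl

lemma mcCS_succ (Δ : ℕ → Module.End 𝕜 A) (h : Module.End 𝕜 A) (n : ℕ) :
    mcCS Δ h (n + 1) = ∑ c : Composition (n + 1), mcWord 𝕜 Δ h c.blocks := by
  rw [mcCS, if_neg (Nat.succ_ne_zero n)]

lemma mcD_zero (Δ : ℕ → Module.End 𝕜 A) : mcD Δ 0 = 0 := rfl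

set_option maxHeartbeats 1000000 in
lemma mcCS_rec (Δ : ℕ → Module.End 𝕜 A) (h : Module.End 𝕜 A) (n : ℕ) :
    mcCS Δ h n = mcD Δ n + ∑ x ∈ Finset.HasAntidiagonal.antidiagonal n, mcD Δ x.1 * h * mcCS Δ h x.2 := by
  cases n with
  | zero => simp [mcCS, mcD]
  | succ n =>
    have hL : mcCS Δ h (n + 1)
        = ∑ b ∈ Finset.range (n + 1), ∑ t ∈ Pset b, mcWord 𝕜 Δ h ((n + 1 - b) :: t) := by
      rw [mcCS_succ, sum_comp, Pset_succ]
      rw [Finset.sum_biUnion]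
      · refine Finset.sum_congr rfl fun b _ => ?_
        rw [Finset.sum_image]
        intro t1 _ t2 _ ht
        exact (List.cons.injEq _ _ _ _ ▸ ht).2
      · intro b1 hb1 b2 hb2 hne
        apply Finset.disjoint_left.mpr
        intro l hl1 hl2
        obtain ⟨t1, ht1, he1⟩ := Finset.mem_image.mp hl1
        obtain ⟨t2, ht2, he2⟩ := Finset.mem_image.mp hl2
        have h1 : t1.sum = b1 := (mem_Pset.mp ht1).1
        have h2 : t2.sum = b2 := (mem_Pset.mp ht2).1
        have heq : (n + 1 - b1) :: t1 = (n + 1 - b2) :: t2 := he1.trans he2.symm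
        have : t1 = t2 := (List.cons.injEq _ _ _ _ ▸ heq).2
        rw [this] at h1
        exact hne (h1.symm.trans h2)
    -- evaluate the b = 0 term and the rest
    have hL2 : mcCS Δ h (n + 1)
        = Δ (n + 1) + ∑ b ∈ Finset.range n, Δ (n - b) * h * mcCS Δ h (b + 1) := by
      rw [hL, Finset.sum_range_succ']
      have h0 : ∑ t ∈ Pset 0, mcWord 𝕜 Δ h ((n + 1 - 0) :: t) = Δ (n + 1) := by
        rw [Pset_zero, Finset.sum_singleton, Nat.sub_zero, mcWord_single]
      rw [h0, add_comm]
      congr 1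
      refine Finset.sum_congr rfl fun b hb => ?_
      have hb' : b < n := Finset.mem_range.mp hb
      have : ∀ t ∈ Pset (b + 1), mcWord 𝕜 Δ h ((n + 1 - (b + 1)) :: t)
          = Δ (n - b) * h * mcWord 𝕜 Δ h t := by
        intro t ht
        have htne : t ≠ [] := by
          intro hnil
          have := (mem_Pset.mp ht).1
          rw [hnil] at this
          simp at this
        rw [show n + 1 - (b + 1) = n - b by omega, mcWord_cons Δ h _ _ htne]
      rw [Finset.sum_congr rfl this, mcCS_succ, sum_comp, Finset.mul_sum]
    have hR : ∑ x ∈ Finset.HasAntidiagonal.antidiagonal (n + 1), mcD Δ x.1 * h * mcCS Δ h x.2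
        = ∑ b ∈ Finset.range n, Δ (n - b) * h * mcCS Δ h (b + 1) := by
      calc ∑ x ∈ Finset.HasAntidiagonal.antidiagonal (n + 1), mcD Δ x.1 * h * mcCS Δ h x.2
          = ∑ k ∈ Finset.range (n + 2), mcD Δ k * h * mcCS Δ h (n + 1 - k) :=
            Finset.Nat.sum_antidiagonal_eq_sum_range_succ_mk _ _
        _ = ∑ k ∈ Finset.range (n + 1), mcD Δ (k + 1) * h * mcCS Δ h (n + 1 - (k + 1))
              + mcD Δ 0 * h * mcCS Δ h (n + 1 - 0) := Finset.sum_range_succ' _ _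
        _ = ∑ k ∈ Finset.range (n + 1), mcD Δ (k + 1) * h * mcCS Δ h (n - k) := by
            simp [mcD_zero, Nat.add_sub_add_right]
        _ = ∑ k ∈ Finset.range n, mcD Δ (k + 1) * h * mcCS Δ h (n - k) := by
            rw [Finset.sum_range_succ]
            simp [mcCS_zero]
        _ = ∑ k ∈ Finset.range n, Δ (n - (n - 1 - k)) * h * mcCS Δ h ((n - 1 - k) + 1) := by
            refine Finset.sum_congr rfl fun k hk => ?_
            have hk' := Finset.mem_range.mp hk
            rw [show n - (n - 1 - k) = k + 1 by omega, show (n - 1 - k) + 1 = n - k by omega,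
              mcD, if_neg (by omega)]
        _ = ∑ b ∈ Finset.range n, Δ (n - b) * h * mcCS Δ h (b + 1) :=
            Finset.sum_range_reflect (fun b => Δ (n - b) * h * mcCS Δ h (b + 1)) n
    rw [hL2, hR, mcD, if_neg (Nat.succ_ne_zero n)]
lemma ps_vanish {R : Type} [Ring R] (U Y : PowerSeries R)
    (hU : PowerSeries.coeff (R := R) 0 U = 0) (hY : Y = U * Y) : Y = 0 := by
  have hz : ∀ n, PowerSeries.coeff (R := R) n Y = 0 := by
    intro n
    induction n using Nat.strong_induction_on with
    | _ n ih =>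
      rw [hY, PowerSeries.coeff_mul]
      apply Finset.sum_eq_zero
      rintro ⟨a, b⟩ hx
      have hab := Finset.HasAntidiagonal.mem_antidiagonal.mp hx
      rcases Nat.eq_zero_or_pos a with h0 | hpos
      · subst h0; rw [hU, zero_mul]
      · have hb : b < n := by omega
        rw [ih b hb, mul_zero]
  ext n
  rw [hz, map_zero]

lemma key_ring {R : Type} [Ring R] (dd Hh W D Ee : R)
    (hS : dd * D + D * dd + D * D = 0) (hW : W = D + D * Hh * W)
    (hE : Ee = 1 + dd * Hh + Hh * dd) :
    dd * W + W * dd + W * Ee * W = (D * Hh) * (dd * W + W * dd + W * Ee * W) := by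
  subst hE
  have hR : W - (D + D * Hh * W) = 0 := sub_eq_zero.mpr hW
  have key : (dd * W + W * dd + W * (1 + dd * Hh + Hh * dd) * W)
        - (D * Hh) * (dd * W + W * dd + W * (1 + dd * Hh + Hh * dd) * W)
      = (dd * D + D * dd + D * D) * (1 + Hh * W) + (D + dd) * (W - (D + D * Hh * W))
        + (W - (D + D * Hh * W)) * dd + (W - (D + D * Hh * W)) * (1 + dd * Hh + Hh * dd) * W := by
    noncomm_ring
  rw [hS, hR] at key
  simp only [zero_mul, mul_zero, add_zero, zero_add] at key
  exact sub_eq_zero.mp key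

lemma main_identity (Δ : ℕ → Module.End 𝕜 A) (h : Module.End 𝕜 A)
    (hrel : ∀ n : ℕ, ∑ k ∈ Finset.range (n + 1), Δ k * Δ (n - k) = 0)
    (e : Module.End 𝕜 A) (he : e = 1 + Δ 0 * h + h * Δ 0) (n : ℕ) :
    Δ 0 * mcCS Δ h n + mcCS Δ h n * Δ 0
      + ∑ x ∈ Finset.HasAntidiagonal.antidiagonal n, mcCS Δ h x.1 * e * mcCS Δ h x.2 = 0 := by
  classical
  let C : Module.End 𝕜 A →+* PowerSeries (Module.End 𝕜 A) := PowerSeries.C (R := Module.End 𝕜 A)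
  let W : PowerSeries (Module.End 𝕜 A) := PowerSeries.mk (mcCS Δ h)
  let D : PowerSeries (Module.End 𝕜 A) := PowerSeries.mk (mcD Δ)
  let dd : PowerSeries (Module.End 𝕜 A) := C (Δ 0)
  -- functional equation for W
  have hW : W = D + D * (C h) * W := by
    refine PowerSeries.ext fun m => ?_
    rw [PowerSeries.coeff_mk, map_add, PowerSeries.coeff_mk, mul_assoc, PowerSeries.coeff_mul]
    rw [mcCS_rec]
    congr 1
    refine Finset.sum_congr rfl fun x hx => ?_
    rw [PowerSeries.coeff_mk, PowerSeries.coeff_C_mul, PowerSeries.coeff_mk, mul_assoc]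
  -- quadratic relation for D
  have hT : PowerSeries.mk Δ = dd + D := by
    refine PowerSeries.ext fun m => ?_
    cases m with
    | zero =>
      rw [PowerSeries.coeff_mk, map_add, PowerSeries.coeff_mk, mcD_zero, add_zero,
        PowerSeries.coeff_zero_C]
    | succ m =>
      rw [PowerSeries.coeff_mk, map_add, PowerSeries.coeff_mk, PowerSeries.coeff_C,
        if_neg (Nat.succ_ne_zero m), mcD, if_neg (Nat.succ_ne_zero m), zero_add]
  have hTT : PowerSeries.mk Δ * PowerSeries.mk Δ = 0 := by
    refine PowerSeries.ext fun m => ?_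
    rw [PowerSeries.coeff_mul, map_zero, Finset.Nat.sum_antidiagonal_eq_sum_range_succ_mk]
    simpa [PowerSeries.coeff_mk] using hrel m
  have hdd2 : dd * dd = 0 := by
    have h00 : Δ 0 * Δ 0 = 0 := by simpa using hrel 0
    rw [show dd * dd = C (Δ 0 * Δ 0) from (map_mul C _ _).symm, h00, map_zero]
  have hS : dd * D + D * dd + D * D = 0 := by
    have expand : dd * D + D * dd + D * D
        = PowerSeries.mk Δ * PowerSeries.mk Δ - dd * dd := by
      rw [hT]; noncomm_ring
    rw [expand, hTT, hdd2, sub_zero]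
  -- homotopy relation
  have hE : C e = 1 + dd * (C h) + (C h) * dd := by
    rw [he, map_add, map_add, map_one, map_mul, map_mul]
  -- the key identity
  have hkey := key_ring dd (C h) W D (C e) hS hW hE
  have hU0 : PowerSeries.coeff (R := Module.End 𝕜 A) 0 (D * C h) = 0 := by
    rw [PowerSeries.coeff_mul_C, PowerSeries.coeff_mk, mcD_zero, zero_mul]
  have hY0 : dd * W + W * dd + W * (C e) * W = 0 := ps_vanish _ _ hU0 hkey
  -- extract coefficient n
  have := congrArg (PowerSeries.coeff (R := Module.End 𝕜 A) n) hY0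
  rw [map_zero, map_add, map_add, PowerSeries.coeff_C_mul, PowerSeries.coeff_mul_C,
    PowerSeries.coeff_mk] at this
  have hco : PowerSeries.coeff (R := Module.End 𝕜 A) n (W * C e * W)
      = ∑ x ∈ Finset.HasAntidiagonal.antidiagonal n, mcCS Δ h x.1 * e * mcCS Δ h x.2 := by
    rw [PowerSeries.coeff_mul]
    refine Finset.sum_congr rfl fun x hx => ?_
    rw [PowerSeries.coeff_mul_C]
    show PowerSeries.coeff x.1 (PowerSeries.mk (mcCS Δ h)) * e
        * PowerSeries.coeff x.2 (PowerSeries.mk (mcCS Δ h)) = _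
    rw [PowerSeries.coeff_mk, PowerSeries.coeff_mk]
  rw [hco] at this
  exact this

section Deg

variable {B C' : Type} [AddCommGroup B] [Module 𝕜 B] [AddCommGroup C'] [Module 𝕜 C']
variable {𝒜 : ℤ → Submodule 𝕜 A} {ℬ : ℤ → Submodule 𝕜 B} {𝒞 : ℤ → Submodule 𝕜 C'}

lemma hasDeg_iff {f : A →ₗ[𝕜] B} {m : ℤ} :
    HasDeg 𝕜 𝒜 ℬ f m ↔ ∀ j : ℤ, ∀ x ∈ 𝒜 j, f x ∈ ℬ (j + m) := by
  constructor
  · intro hf j x hx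
    exact hf j ⟨x, hx, rfl⟩
  · rintro hf j y ⟨x, hx, rfl⟩
    exact hf j x hx

lemma hasDeg_congr {f : A →ₗ[𝕜] B} {m m' : ℤ} (hf : HasDeg 𝕜 𝒜 ℬ f m) (hm : m = m') :
    HasDeg 𝕜 𝒜 ℬ f m' := hm ▸ hf

lemma hasDeg_comp {f : A →ₗ[𝕜] B} {g : B →ₗ[𝕜] C'} {m m' : ℤ}
    (hf : HasDeg 𝕜 𝒜 ℬ f m) (hg : HasDeg 𝕜 ℬ 𝒞 g m') :
    HasDeg 𝕜 𝒜 𝒞 (g ∘ₗ f) (m + m') := by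
  rw [hasDeg_iff] at hf hg ⊢
  intro j x hx
  have := hg (j + m) (f x) (hf j x hx)
  rwa [add_assoc] at this

lemma hasDeg_sum {γ : Type*} {s : Finset γ} {F : γ → (A →ₗ[𝕜] B)} {m : ℤ}
    (hF : ∀ c ∈ s, HasDeg 𝕜 𝒜 ℬ (F c) m) :
    HasDeg 𝕜 𝒜 ℬ (∑ c ∈ s, F c) m := by
  rw [hasDeg_iff]
  intro j x hx
  rw [LinearMap.sum_apply]
  exact Submodule.sum_mem _ fun c hc => hasDeg_iff.mp (hF c hc) j x hx

lemma hasDeg_mul {f g : Module.End 𝕜 A} {m m' : ℤ}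
    (hf : HasDeg 𝕜 𝒜 𝒜 f m) (hg : HasDeg 𝕜 𝒜 𝒜 g m') :
    HasDeg 𝕜 𝒜 𝒜 (f * g) (m' + m) := by
  rw [Module.End.mul_eq_comp]
  exact hasDeg_comp hg hf

lemma mcWord_deg (Δ : ℕ → Module.End 𝕜 A) (h : Module.End 𝕜 A)
    (hΔd : ∀ k : ℕ, HasDeg 𝕜 𝒜 𝒜 (Δ k) (2 * (k : ℤ) - 1))
    (hh : HasDeg 𝕜 𝒜 𝒜 h 1) :
    ∀ l : List ℕ, l ≠ [] → HasDeg 𝕜 𝒜 𝒜 (mcWord 𝕜 Δ h l) (2 * (l.sum : ℤ) - 1) := by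
  intro l
  induction l with
  | nil => intro hl; exact absurd rfl hl
  | cons a t ih =>
    intro _
    cases t with
    | nil =>
      refine hasDeg_congr (hΔd a) ?_
      simp
    | cons b r =>
      rw [show mcWord 𝕜 Δ h (a :: b :: r) = Δ a * (h * mcWord 𝕜 Δ h (b :: r)) by
        rw [mcWord, mul_assoc]]
      have h1 := ih (by simp)
      have h2 := hasDeg_mul hh h1
      have h3 := hasDeg_mul (hΔd a) h2
      refine hasDeg_congr h3 ?_
      push_cast [List.sum_cons]
      ring

end Deg
end HTTaux

/-- the transferred operators define a multicomplex structure on `H`. -/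
theorem transferred_isMulticomplex
    {A H : Type} [AddCommGroup A] [Module 𝕜 A] [AddCommGroup H] [Module 𝕜 H]
    (𝒜 : ℤ → Submodule 𝕜 A) (ℋ : ℤ → Submodule 𝕜 H)
    (h𝒜 : DirectSum.IsInternal 𝒜) (hℋ : DirectSum.IsInternal ℋ)
    (Δ : ℕ → Module.End 𝕜 A) (hΔ : IsMulticomplex 𝕜 𝒜 Δ)
    (dH : Module.End 𝕜 H) (hdHdeg : HasDeg 𝕜 ℋ ℋ dH (-1)) (hdHsq : dH ∘ₗ dH = 0)
    (p : A →ₗ[𝕜] H) (i : H →ₗ[𝕜] A) (h : Module.End 𝕜 A)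
    (hret : IsHomotopyRetract 𝕜 𝒜 ℋ (Δ 0) dH p i h) :
    IsMulticomplex 𝕜 ℋ (transferredDelta 𝕜 Δ h p i dH) := by
  classical
  obtain ⟨hΔdeg, hΔrel⟩ := hΔ
  obtain ⟨hpdeg, hideg, hhdeg, hpd, hid, hqi, hhom⟩ := hret
  set e : Module.End 𝕜 A := (i ∘ₗ p : A →ₗ[𝕜] A) with hedef
  have hrel : ∀ n : ℕ, ∑ k ∈ Finset.range (n + 1), Δ k * Δ (n - k) = 0 := by
    intro n
    have := hΔrel n
    simpa only [Module.End.mul_eq_comp] using this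
  have he : e = 1 + Δ 0 * h + h * Δ 0 := by
    have h1 : e - 1 = Δ 0 * h + h * Δ 0 := by
      simpa only [Module.End.mul_eq_comp, Module.End.one_eq_id] using hhom
    have h2 := sub_eq_iff_eq_add'.mp h1
    rw [h2]
    abel
  have hMain := HTTaux.main_identity Δ h hrel e he
  set Q : ℕ → Module.End 𝕜 H := fun m => p ∘ₗ (HTTaux.mcCS Δ h m) ∘ₗ i with hQdef
  have hp' : ∀ y : A, p (Δ 0 y) = dH (p y) := fun y => by
    have := LinearMap.congr_fun hpd y
    simpa using this
  have hi' : ∀ w : H, i (dH w) = Δ 0 (i w) := fun w => by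
    have := LinearMap.congr_fun hid w
    simpa using this
  have qrel : ∀ n : ℕ, dH ∘ₗ Q n + Q n ∘ₗ dH
      + ∑ x ∈ Finset.HasAntidiagonal.antidiagonal n, Q x.1 ∘ₗ Q x.2 = 0 := by
    intro n
    refine LinearMap.ext fun v => ?_
    have h0 := congrArg p (LinearMap.congr_fun (hMain n) (i v))
    simp only [LinearMap.add_apply, Module.End.mul_apply, LinearMap.sum_apply,
      LinearMap.zero_apply, map_add, map_sum, map_zero, LinearMap.comp_apply, hedef] at h0
    simp only [LinearMap.add_apply, LinearMap.comp_apply, LinearMap.sum_apply,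
      LinearMap.zero_apply, hQdef, hi', hp']
    simp only [hp'] at h0
    exact h0
  have pull : ∀ {γ : Type} (s : Finset γ) (F : γ → Module.End 𝕜 A),
      ∑ c ∈ s, (p ∘ₗ F c ∘ₗ i) = p ∘ₗ (∑ c ∈ s, F c) ∘ₗ i := by
    intro γ s F
    refine LinearMap.ext fun v => ?_
    simp [LinearMap.sum_apply, map_sum]
  have hQ0 : Q 0 = 0 := by
    refine LinearMap.ext fun v => ?_
    simp [hQdef, HTTaux.mcCS_zero]
  have hTDs : ∀ k : ℕ, transferredDelta 𝕜 Δ h p i dH (k + 1) = Q (k + 1) := by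
    intro k
    show ∑ c : Composition (k + 1), p ∘ₗ mcWord 𝕜 Δ h c.blocks ∘ₗ i = _
    rw [pull, hQdef, ← HTTaux.mcCS_succ]
  have hTD : ∀ k : ℕ, transferredDelta 𝕜 Δ h p i dH k
      = (if k = 0 then dH else 0) + Q k := by
    intro k
    cases k with
    | zero =>
      rw [if_pos rfl, hQ0, add_zero]
      rfl
    | succ k =>
      rw [if_neg (Nat.succ_ne_zero k), zero_add, hTDs]
  constructor
  · -- degrees
    intro n
    cases n with
    | zero =>
      refine HTTaux.hasDeg_congr hdHdeg ?_
      norm_num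
    | succ n =>
      show HasDeg 𝕜 ℋ ℋ (∑ c : Composition (n + 1), p ∘ₗ mcWord 𝕜 Δ h c.blocks ∘ₗ i) _
      refine HTTaux.hasDeg_sum fun c _ => ?_
      have hbne : c.blocks ≠ [] := by
        intro hnil
        have := c.blocks_sum
        rw [hnil] at this
        simp at this
      have hw := HTTaux.mcWord_deg Δ h hΔdeg hhdeg c.blocks hbne
      have h1 := HTTaux.hasDeg_comp (𝒞 := ℋ) (HTTaux.hasDeg_comp hideg hw) hpdeg
      refine HTTaux.hasDeg_congr h1 ?_
      rw [c.blocks_sum]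
      push_cast
      ring
  · -- quadratic relations
    intro n
    cases n with
    | zero =>
      rw [Finset.sum_range_one]
      exact hdHsq
    | succ m =>
      have expand : ∀ k : ℕ, transferredDelta 𝕜 Δ h p i dH k
            ∘ₗ transferredDelta 𝕜 Δ h p i dH (m + 1 - k)
          = (if k = 0 then dH else 0) ∘ₗ (if m + 1 - k = 0 then dH else 0)
            + (if k = 0 then dH else 0) ∘ₗ Q (m + 1 - k)
            + Q k ∘ₗ (if m + 1 - k = 0 then dH else 0) + Q k ∘ₗ Q (m + 1 - k) := by
        intro k
        rw [hTD k, hTD (m + 1 - k), LinearMap.add_comp, LinearMap.comp_add, LinearMap.comp_add]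
        abel
      rw [Finset.sum_congr rfl fun k _ => expand k]
      rw [Finset.sum_add_distrib, Finset.sum_add_distrib, Finset.sum_add_distrib]
      have S1 : ∑ k ∈ Finset.range (m + 1 + 1),
          (if k = 0 then dH else 0) ∘ₗ (if m + 1 - k = 0 then dH else 0) = 0 := by
        refine Finset.sum_eq_zero fun k hk => ?_
        rcases eq_or_ne k 0 with rfl | hkne
        · have hne : m + 1 - 0 ≠ 0 := by omega
          rw [if_neg hne, LinearMap.comp_zero]
        · rw [if_neg hkne, LinearMap.zero_comp]
      have S2 : ∑ k ∈ Finset.range (m + 1 + 1), (if k = 0 then dH else 0) ∘ₗ Q (m + 1 - k)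
          = dH ∘ₗ Q (m + 1) := by
        rw [Finset.sum_eq_single_of_mem 0 (Finset.mem_range.mpr (by omega))]
        · rw [if_pos rfl, Nat.sub_zero]
        · intro k _ hkne
          rw [if_neg hkne, LinearMap.zero_comp]
      have S3 : ∑ k ∈ Finset.range (m + 1 + 1), Q k ∘ₗ (if m + 1 - k = 0 then dH else 0)
          = Q (m + 1) ∘ₗ dH := by
        rw [Finset.sum_eq_single_of_mem (m + 1) (Finset.mem_range.mpr (by omega))]
        · rw [Nat.sub_self, if_pos rfl]
        · intro k hk hkne
          have := Finset.mem_range.mp hk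
          have hne : m + 1 - k ≠ 0 := by omega
          rw [if_neg hne, LinearMap.comp_zero]
      rw [S1, S2, S3, zero_add]
      have hq := qrel (m + 1)
      rw [Finset.Nat.sum_antidiagonal_eq_sum_range_succ_mk] at hq
      exact hq
end

section
/- Let (A, Δ_0, Δ_1, Δ_2, …) be a multicomplex, let (p, i, h) be a homotopy retract of (A, d = Δ_0) onto a chain complex (H, d_H), and endow H with the transferred multicomplex structure Δ′_n := Σ_{k≥1} Σ_{i_1+⋯+i_k = n, i_j ≥ 1} p Δ_{i_1} h Δ_{i_2} h ⋯ h Δ_{i_k} i (n ≥ 1), Δ′_0 := d_H. Then the family i_0 := i and i_n := Σ_{k≥1} Σ_{i_1+⋯+i_k = n, i_j ≥ 1} h Δ_{i_1} h Δ_{i_2} h ⋯ h Δ_{i_k} i (n ≥ 1) is an ∞-morphism from (H, Δ′_•) to (A, Δ_•), i.e. Σ_{k+l=n} i_k Δ′_l = Σ_{k+l=n} Δ_k i_l for all n ≥ 0. -/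
open Module LinearMap Finset

variable (𝕜 : Type) [Field 𝕜] [CharZero 𝕜]

section AuxLemmas

set_option linter.unusedSectionVars false

namespace McTransferAux

variable {𝕜 : Type} [Field 𝕜] [CharZero 𝕜]

theorem comp_sum {A B C : Type} [AddCommGroup A] [Module 𝕜 A] [AddCommGroup B] [Module 𝕜 B]
    [AddCommGroup C] [Module 𝕜 C] {ι : Type*} (s : Finset ι) (f : ι → (A →ₗ[𝕜] B))
    (g : B →ₗ[𝕜] C) : g ∘ₗ (∑ k ∈ s, f k) = ∑ k ∈ s, g ∘ₗ f k := by
  ext x; simp [LinearMap.sum_apply, map_sum]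

theorem sum_comp {A B C : Type} [AddCommGroup A] [Module 𝕜 A] [AddCommGroup B] [Module 𝕜 B]
    [AddCommGroup C] [Module 𝕜 C] {ι : Type*} (s : Finset ι) (f : ι → (B →ₗ[𝕜] C))
    (g : A →ₗ[𝕜] B) : (∑ k ∈ s, f k) ∘ₗ g = ∑ k ∈ s, (f k) ∘ₗ g := by
  ext x; simp [LinearMap.sum_apply]

theorem hasDeg_congr {A B : Type} [AddCommGroup A] [Module 𝕜 A] [AddCommGroup B] [Module 𝕜 B]
    {𝒜 : ℤ → Submodule 𝕜 A} {ℬ : ℤ → Submodule 𝕜 B} {f : A →ₗ[𝕜] B} {m m' : ℤ}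
    (hf : HasDeg 𝕜 𝒜 ℬ f m) (e : m = m') : HasDeg 𝕜 𝒜 ℬ f m' := e ▸ hf

theorem hasDeg_comp {A B C : Type} [AddCommGroup A] [Module 𝕜 A] [AddCommGroup B] [Module 𝕜 B]
    [AddCommGroup C] [Module 𝕜 C]
    {𝒜 : ℤ → Submodule 𝕜 A} {ℬ : ℤ → Submodule 𝕜 B} {𝒞 : ℤ → Submodule 𝕜 C}
    {f : A →ₗ[𝕜] B} {g : B →ₗ[𝕜] C} {m m' : ℤ}
    (hf : HasDeg 𝕜 𝒜 ℬ f m) (hg : HasDeg 𝕜 ℬ 𝒞 g m') :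
    HasDeg 𝕜 𝒜 𝒞 (g ∘ₗ f) (m + m') := by
  intro j
  rw [Submodule.map_comp]
  calc ((𝒜 j).map f).map g ≤ (ℬ (j + m)).map g := Submodule.map_mono (hf j)
    _ ≤ 𝒞 (j + m + m') := hg (j + m)
    _ = 𝒞 (j + (m + m')) := by rw [add_assoc]

theorem hasDeg_sum {A B : Type} [AddCommGroup A] [Module 𝕜 A] [AddCommGroup B] [Module 𝕜 B]
    {𝒜 : ℤ → Submodule 𝕜 A} {ℬ : ℤ → Submodule 𝕜 B} {ι : Type*} {s : Finset ι}
    {f : ι → (A →ₗ[𝕜] B)} {m : ℤ}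
    (hf : ∀ k ∈ s, HasDeg 𝕜 𝒜 ℬ (f k) m) : HasDeg 𝕜 𝒜 ℬ (∑ k ∈ s, f k) m := by
  intro j
  rw [Submodule.map_le_iff_le_comap]
  intro x hx
  simp only [Submodule.mem_comap, LinearMap.sum_apply]
  exact Submodule.sum_mem _ fun k hk => hf k hk j (Submodule.mem_map_of_mem hx)

theorem mcWord_cons {A : Type} [AddCommGroup A] [Module 𝕜 A]
    (Δ : ℕ → Module.End 𝕜 A) (h : Module.End 𝕜 A) {a : ℕ} {bs : List ℕ} (hbs : bs ≠ []) :
    mcWord 𝕜 Δ h (a :: bs) = Δ a ∘ₗ (h ∘ₗ mcWord 𝕜 Δ h bs) := by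
  cases bs with
  | nil => exact absurd rfl hbs
  | cons b rest => rfl

theorem hasDeg_mcWord {A : Type} [AddCommGroup A] [Module 𝕜 A]
    {𝒜 : ℤ → Submodule 𝕜 A} {Δ : ℕ → Module.End 𝕜 A} {h : Module.End 𝕜 A}
    (hΔ : ∀ n : ℕ, HasDeg 𝕜 𝒜 𝒜 (Δ n) (2 * (n : ℤ) - 1)) (hh : HasDeg 𝕜 𝒜 𝒜 h 1) :
    ∀ (bs : List ℕ) (a : ℕ),
      HasDeg 𝕜 𝒜 𝒜 (mcWord 𝕜 Δ h (a :: bs)) (2 * ((a : ℤ) + (bs.sum : ℤ)) - 1) := by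
  intro bs
  induction bs with
  | nil =>
    intro a
    exact hasDeg_congr (hΔ a) (by simp)
  | cons b rest ih =>
    intro a
    rw [mcWord_cons Δ h (List.cons_ne_nil b rest)]
    have := hasDeg_comp (hasDeg_comp (ih b) hh) (hΔ a)
    refine hasDeg_congr this (by push_cast [List.map_cons, List.sum_cons]; ring)

theorem headI_cons_tail {l : List ℕ} (h : l ≠ []) : l.headI :: l.tail = l := by
  cases l with
  | nil => exact absurd rfl h
  | cons a t => rfl

theorem comp_blocks_ne_nil {n : ℕ} (c : Composition (n + 1)) : c.blocks ≠ [] := by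
  intro hc
  have := c.blocks_sum
  rw [hc] at this
  simp at this

theorem comp_headI_le {n : ℕ} (c : Composition (n + 1)) : c.blocks.headI ≤ n + 1 := by
  have h := c.blocks_sum
  rw [← headI_cons_tail (comp_blocks_ne_nil c), List.sum_cons] at h
  omega

instance : Unique (Composition 0) where
  default := ⟨[], by simp, by simp⟩
  uniq c := by
    have : c.blocks = [] := by
      cases hb : c.blocks with
      | nil => rfl
      | cons a t =>
        have h1 := c.one_le_blocks (by rw [hb]; exact List.mem_cons_self)
        have h2 := c.blocks_sum
        rw [hb] at h2
        simp [List.sum_cons] at h2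
        omega
    exact Composition.ext this

/-- Splitting off the first block of a composition of `n + 1`. -/
def splitEquiv (n : ℕ) : Composition (n + 1) ≃ Σ l : Fin (n + 1), Composition (n - l) where
  toFun c :=
    ⟨⟨c.blocks.headI - 1, by have := comp_headI_le c; omega⟩,
     ⟨c.blocks.tail,
      fun {i} hi => c.blocks_pos (List.mem_of_mem_tail hi),
      by
        have h := c.blocks_sum
        rw [← headI_cons_tail (comp_blocks_ne_nil c), List.sum_cons] at h
        have h1 : 1 ≤ c.blocks.headI := by
          apply c.one_le_blocks
          rw [← headI_cons_tail (comp_blocks_ne_nil c)]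
          exact List.mem_cons_self
        simp only []
        omega⟩⟩
  invFun lc :=
    ⟨(lc.1.1 + 1) :: lc.2.blocks,
     fun {i} hi => by
       rcases List.mem_cons.1 hi with h | h
       · omega
       · exact lc.2.blocks_pos h,
     by
       rw [List.sum_cons, lc.2.blocks_sum]
       have := lc.1.2
       omega⟩
  left_inv c := by
    apply Composition.ext
    simp only []
    have h1 : 1 ≤ c.blocks.headI := by
      apply c.one_le_blocks
      rw [← headI_cons_tail (comp_blocks_ne_nil c)]
      exact List.mem_cons_self
    rw [show c.blocks.headI - 1 + 1 = c.blocks.headI from by omega]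
    exact headI_cons_tail (comp_blocks_ne_nil c)
  right_inv lc := rfl

theorem sum_comp_succ {M : Type*} [AddCommMonoid M] (n : ℕ) (F : List ℕ → M) :
    ∑ c : Composition (n + 1), F c.blocks
      = ∑ l ∈ Finset.range (n + 1), ∑ c : Composition (n - l), F ((l + 1) :: c.blocks) := by
  rw [← Fin.sum_univ_eq_sum_range (fun l => ∑ c : Composition (n - l), F ((l + 1) :: c.blocks))]
  rw [Fintype.sum_equiv (splitEquiv n)
      (fun c => F c.blocks) (fun x => F ((x.1.1 + 1) :: x.2.blocks))]
  · rw [← Finset.univ_sigma_univ, Finset.sum_sigma]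
  · intro c
    simp only [splitEquiv, Equiv.coe_fn_mk]
    have h1 : 1 ≤ c.blocks.headI := by
      apply c.one_le_blocks
      rw [← headI_cons_tail (comp_blocks_ne_nil c)]
      exact List.mem_cons_self
    show F c.blocks = F ((c.blocks.headI - 1 + 1) :: c.blocks.tail)
    rw [show c.blocks.headI - 1 + 1 = c.blocks.headI from by omega,
        headI_cons_tail (comp_blocks_ne_nil c)]

theorem sum_Ico_one {M : Type*} [AddCommMonoid M] (f : ℕ → M) (n : ℕ) :
    ∑ k ∈ Finset.Ico 1 (n + 1), f k = ∑ k ∈ Finset.range n, f (k + 1) := by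
  rw [Finset.sum_Ico_eq_sum_range]
  simp only [Nat.add_sub_cancel]
  exact Finset.sum_congr rfl fun k _ => by rw [Nat.add_comm]

variable {A H : Type} [AddCommGroup A] [Module 𝕜 A] [AddCommGroup H] [Module 𝕜 H]

/-- The maps `i_n` of the transferred `∞`-morphism. -/
noncomputable def Wfun (Δ : ℕ → Module.End 𝕜 A) (h : Module.End 𝕜 A) (i : H →ₗ[𝕜] A) :
    ℕ → (H →ₗ[𝕜] A)
  | 0 => i
  | m + 1 => ∑ c : Composition (m + 1), h ∘ₗ mcWord 𝕜 Δ h c.blocks ∘ₗ i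

/-- The auxiliary sums `S_n = ∑_{l=1}^{n} Δ_l i_{n-l}`. -/
noncomputable def Sfun (Δ : ℕ → Module.End 𝕜 A) (h : Module.End 𝕜 A) (i : H →ₗ[𝕜] A)
    (n : ℕ) : H →ₗ[𝕜] A :=
  ∑ l ∈ Finset.Ico 1 (n + 1), Δ l ∘ₗ Wfun Δ h i (n - l)

/-- The auxiliary sums `T_n = ∑_{k=0}^{n} Δ_k i_{n-k}`. -/
noncomputable def Tfun (Δ : ℕ → Module.End 𝕜 A) (h : Module.End 𝕜 A) (i : H →ₗ[𝕜] A)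
    (n : ℕ) : H →ₗ[𝕜] A :=
  ∑ k ∈ Finset.range (n + 1), Δ k ∘ₗ Wfun Δ h i (n - k)

variable (Δ : ℕ → Module.End 𝕜 A) (h : Module.End 𝕜 A) (i : H →ₗ[𝕜] A)

theorem sum_mcWord (n : ℕ) :
    (∑ c : Composition (n + 1), mcWord 𝕜 Δ h c.blocks ∘ₗ i) = Sfun Δ h i (n + 1) := by
  refine (sum_comp_succ n (fun bs => mcWord 𝕜 Δ h bs ∘ₗ i)).trans ?_
  show _ = ∑ l ∈ Finset.Ico 1 (n + 2), Δ l ∘ₗ Wfun Δ h i (n + 1 - l)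
  rw [sum_Ico_one (fun l => Δ l ∘ₗ Wfun Δ h i (n + 1 - l)) (n + 1)]
  refine Finset.sum_congr rfl fun l _ => ?_
  rw [Nat.succ_sub_succ]
  rcases e : n - l with _ | m
  · rw [Fintype.sum_unique (fun c : Composition 0 => mcWord 𝕜 Δ h ((l + 1) :: c.blocks) ∘ₗ i)]
    rfl
  · show _ = Δ (l + 1) ∘ₗ ∑ c : Composition (m + 1), h ∘ₗ mcWord 𝕜 Δ h c.blocks ∘ₗ i
    rw [comp_sum]
    refine Finset.sum_congr rfl fun c _ => ?_
    rw [mcWord_cons Δ h (comp_blocks_ne_nil c)]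
    ext x; rfl

theorem Wfun_succ (n : ℕ) : Wfun Δ h i (n + 1) = h ∘ₗ Sfun Δ h i (n + 1) := by
  show (∑ c : Composition (n + 1), h ∘ₗ mcWord 𝕜 Δ h c.blocks ∘ₗ i) = _
  rw [← sum_mcWord, comp_sum]

theorem tD_succ (p : A →ₗ[𝕜] H) (dH : Module.End 𝕜 H) (n : ℕ) :
    transferredDelta 𝕜 Δ h p i dH (n + 1) = p ∘ₗ Sfun Δ h i (n + 1) := by
  show (∑ c : Composition (n + 1), p ∘ₗ mcWord 𝕜 Δ h c.blocks ∘ₗ i) = _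
  rw [← sum_mcWord, comp_sum]

theorem Tfun_split (n : ℕ) :
    Tfun Δ h i n = Δ 0 ∘ₗ Wfun Δ h i n + Sfun Δ h i n := by
  show (∑ k ∈ Finset.range (n + 1), Δ k ∘ₗ Wfun Δ h i (n - k)) = _
  rw [Finset.sum_range_succ' (fun k => Δ k ∘ₗ Wfun Δ h i (n - k)) n]
  rw [add_comm, Nat.sub_zero]
  congr 1
  show _ = ∑ l ∈ Finset.Ico 1 (n + 1), Δ l ∘ₗ Wfun Δ h i (n - l)
  rw [sum_Ico_one (fun l => Δ l ∘ₗ Wfun Δ h i (n - l)) n]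

theorem main (p : A →ₗ[𝕜] H) (dH : Module.End 𝕜 H)
    (hΔrel : ∀ n : ℕ, ∑ a ∈ Finset.range (n + 1), Δ a ∘ₗ Δ (n - a) = 0)
    (hich : i ∘ₗ dH = Δ 0 ∘ₗ i)
    (hhomot : i ∘ₗ p - LinearMap.id = Δ 0 ∘ₗ h + h ∘ₗ Δ 0) :
    ∀ N : ℕ, ∑ k ∈ Finset.range (N + 1),
        Wfun Δ h i k ∘ₗ transferredDelta 𝕜 Δ h p i dH (N - k) = Tfun Δ h i N := by
  intro N
  induction N using Nat.strong_induction_on with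
  | _ N IH =>
    rcases N with _ | n
    · have hT0 : Tfun Δ h i 0 = Δ 0 ∘ₗ i := by
        show (∑ k ∈ Finset.range (0 + 1), Δ k ∘ₗ Wfun Δ h i (0 - k)) = _
        rw [Finset.sum_range_one]
        rfl
      rw [Finset.sum_range_one, hT0]
      exact hich
    · set tD := transferredDelta 𝕜 Δ h p i dH with htD
      have e1 : ∑ k ∈ Finset.range (n + 2), Wfun Δ h i k ∘ₗ tD (n + 1 - k)
          = (i ∘ₗ p) ∘ₗ Sfun Δ h i (n + 1)
            + h ∘ₗ (∑ k ∈ Finset.Ico 1 (n + 2), Sfun Δ h i k ∘ₗ tD (n + 1 - k)) := by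
        rw [Finset.sum_range_succ' (fun k => Wfun Δ h i k ∘ₗ tD (n + 1 - k)) (n + 1)]
        rw [add_comm]
        congr 1
        · rw [Nat.sub_zero, htD, tD_succ]
          ext x; rfl
        · rw [sum_Ico_one (fun k => Sfun Δ h i k ∘ₗ tD (n + 1 - k)) (n + 1), comp_sum]
          refine Finset.sum_congr rfl fun k hk => ?_
          rw [Nat.succ_sub_succ, Wfun_succ]
          ext x; rfl
      have e2 : (∑ k ∈ Finset.Ico 1 (n + 2), Sfun Δ h i k ∘ₗ tD (n + 1 - k))
          = ∑ l ∈ Finset.Ico 1 (n + 2), Δ l ∘ₗ Tfun Δ h i (n + 1 - l) := by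
        calc ∑ k ∈ Finset.Ico 1 (n + 2), Sfun Δ h i k ∘ₗ tD (n + 1 - k)
            = ∑ k ∈ Finset.Ico 1 (n + 2), ∑ l ∈ Finset.Ico 1 (k + 1),
                (Δ l ∘ₗ Wfun Δ h i (k - l)) ∘ₗ tD (n + 1 - k) := by
              refine Finset.sum_congr rfl fun k _ => ?_
              show (∑ l ∈ Finset.Ico 1 (k + 1), Δ l ∘ₗ Wfun Δ h i (k - l)) ∘ₗ tD (n + 1 - k) = _
              rw [sum_comp]
          _ = ∑ l ∈ Finset.Ico 1 (n + 2), ∑ k ∈ Finset.Ico l (n + 2),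
                (Δ l ∘ₗ Wfun Δ h i (k - l)) ∘ₗ tD (n + 1 - k) :=
              Finset.sum_comm' (by intro k l; simp only [Finset.mem_Ico]; omega)
          _ = ∑ l ∈ Finset.Ico 1 (n + 2), Δ l ∘ₗ Tfun Δ h i (n + 1 - l) := by
              refine Finset.sum_congr rfl fun l hl => ?_
              rw [Finset.mem_Ico] at hl
              rw [Finset.sum_Ico_eq_sum_range]
              have hr : n + 2 - l = (n + 1 - l) + 1 := by omega
              rw [hr]
              have step : ∀ m : ℕ, (Δ l ∘ₗ Wfun Δ h i (l + m - l)) ∘ₗ tD (n + 1 - (l + m))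
                  = Δ l ∘ₗ (Wfun Δ h i m ∘ₗ tD ((n + 1 - l) - m)) := by
                intro m
                rw [Nat.add_sub_cancel_left, Nat.sub_add_eq]
                ext x; rfl
              rw [Finset.sum_congr rfl fun m _ => step m, ← comp_sum]
              rw [IH (n + 1 - l) (by omega)]
      have e3 : Δ 0 ∘ₗ Sfun Δ h i (n + 1)
            + (∑ l ∈ Finset.Ico 1 (n + 2), Δ l ∘ₗ Tfun Δ h i (n + 1 - l)) = 0 := by
        have expand : Δ 0 ∘ₗ Sfun Δ h i (n + 1)
              + (∑ l ∈ Finset.Ico 1 (n + 2), Δ l ∘ₗ Tfun Δ h i (n + 1 - l))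
            = ∑ j ∈ Finset.Ico 1 (n + 2),
                (∑ a ∈ Finset.range (j + 1), Δ a ∘ₗ Δ (j - a)) ∘ₗ Wfun Δ h i (n + 1 - j) := by
          have rhs_eq : ∑ j ∈ Finset.Ico 1 (n + 2),
                (∑ a ∈ Finset.range (j + 1), Δ a ∘ₗ Δ (j - a)) ∘ₗ Wfun Δ h i (n + 1 - j)
              = ∑ j ∈ Finset.Ico 1 (n + 2),
                  ((∑ a ∈ Finset.range j, (Δ (a + 1) ∘ₗ Δ (j - (a + 1))) ∘ₗ Wfun Δ h i (n + 1 - j))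
                    + (Δ 0 ∘ₗ Δ j) ∘ₗ Wfun Δ h i (n + 1 - j)) := by
            refine Finset.sum_congr rfl fun j _ => ?_
            rw [sum_comp, Finset.sum_range_succ'
              (fun a => (Δ a ∘ₗ Δ (j - a)) ∘ₗ Wfun Δ h i (n + 1 - j)) j, Nat.sub_zero]
          rw [rhs_eq, Finset.sum_add_distrib]
          have hY : ∑ j ∈ Finset.Ico 1 (n + 2), (Δ 0 ∘ₗ Δ j) ∘ₗ Wfun Δ h i (n + 1 - j)
              = Δ 0 ∘ₗ Sfun Δ h i (n + 1) := by
            rw [show Sfun Δ h i (n + 1)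
                = ∑ l ∈ Finset.Ico 1 (n + 2), Δ l ∘ₗ Wfun Δ h i (n + 1 - l) from rfl, comp_sum]
            exact Finset.sum_congr rfl fun j _ => by ext x; rfl
          have hX : ∑ j ∈ Finset.Ico 1 (n + 2),
                ∑ a ∈ Finset.range j, (Δ (a + 1) ∘ₗ Δ (j - (a + 1))) ∘ₗ Wfun Δ h i (n + 1 - j)
              = ∑ l ∈ Finset.Ico 1 (n + 2), Δ l ∘ₗ Tfun Δ h i (n + 1 - l) := by
            rw [Finset.sum_congr rfl fun j _ =>
              (sum_Ico_one (fun a => (Δ a ∘ₗ Δ (j - a)) ∘ₗ Wfun Δ h i (n + 1 - j)) j).symm]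
            rw [Finset.sum_comm' (s := Finset.Ico 1 (n + 2)) (t := fun j => Finset.Ico 1 (j + 1))
              (t' := Finset.Ico 1 (n + 2)) (s' := fun a => Finset.Ico a (n + 2))
              (f := fun j a => (Δ a ∘ₗ Δ (j - a)) ∘ₗ Wfun Δ h i (n + 1 - j))
              (by intro j a; simp only [Finset.mem_Ico]; omega)]
            refine Finset.sum_congr rfl fun a ha => ?_
            rw [Finset.mem_Ico] at ha
            rw [Finset.sum_Ico_eq_sum_range]
            have hr : n + 2 - a = (n + 1 - a) + 1 := by omega
            rw [hr]
            have step : ∀ m : ℕ, (Δ a ∘ₗ Δ (a + m - a)) ∘ₗ Wfun Δ h i (n + 1 - (a + m))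
                = Δ a ∘ₗ (Δ m ∘ₗ Wfun Δ h i ((n + 1 - a) - m)) := by
              intro m
              rw [Nat.add_sub_cancel_left, Nat.sub_add_eq]
              ext x; rfl
            rw [Finset.sum_congr rfl fun m _ => step m, ← comp_sum]
            rfl
          rw [hX, hY, add_comm]
        rw [expand]
        rw [Finset.sum_congr rfl fun j _ => by rw [hΔrel j]]
        simp
      -- combine everything
      have hip : i ∘ₗ p = LinearMap.id + (Δ 0 ∘ₗ h + h ∘ₗ Δ 0) := by
        rw [sub_eq_iff_eq_add] at hhomot
        rw [hhomot, add_comm]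
      rw [e1, e2, hip, Tfun_split]
      rw [LinearMap.add_comp, LinearMap.add_comp, LinearMap.id_comp]
      have h1 : (Δ 0 ∘ₗ h) ∘ₗ Sfun Δ h i (n + 1) = Δ 0 ∘ₗ Wfun Δ h i (n + 1) := by
        rw [Wfun_succ]; ext x; rfl
      have h2 : (h ∘ₗ Δ 0) ∘ₗ Sfun Δ h i (n + 1)
          + h ∘ₗ (∑ l ∈ Finset.Ico 1 (n + 2), Δ l ∘ₗ Tfun Δ h i (n + 1 - l)) = 0 := by
        have assoc : (h ∘ₗ Δ 0) ∘ₗ Sfun Δ h i (n + 1)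
            = h ∘ₗ (Δ 0 ∘ₗ Sfun Δ h i (n + 1)) := by ext x; rfl
        rw [assoc, ← LinearMap.comp_add, e3, LinearMap.comp_zero]
      rw [h1]
      have rearr : Sfun Δ h i (n + 1) + (Δ 0 ∘ₗ Wfun Δ h i (n + 1)
            + (h ∘ₗ Δ 0) ∘ₗ Sfun Δ h i (n + 1))
            + h ∘ₗ (∑ l ∈ Finset.Ico 1 (n + 2), Δ l ∘ₗ Tfun Δ h i (n + 1 - l))
          = (Δ 0 ∘ₗ Wfun Δ h i (n + 1) + Sfun Δ h i (n + 1))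
            + ((h ∘ₗ Δ 0) ∘ₗ Sfun Δ h i (n + 1)
              + h ∘ₗ (∑ l ∈ Finset.Ico 1 (n + 2), Δ l ∘ₗ Tfun Δ h i (n + 1 - l))) := by
        abel
      rw [rearr, h2, add_zero]

theorem Wfun_deg (𝒜 : ℤ → Submodule 𝕜 A) (ℋ : ℤ → Submodule 𝕜 H)
    (hΔdeg : ∀ n : ℕ, HasDeg 𝕜 𝒜 𝒜 (Δ n) (2 * (n : ℤ) - 1))
    (hhdeg : HasDeg 𝕜 𝒜 𝒜 h 1) (hideg : HasDeg 𝕜 ℋ 𝒜 i 0) :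
    ∀ n : ℕ, HasDeg 𝕜 ℋ 𝒜 (Wfun Δ h i n) (2 * (n : ℤ)) := by
  intro n
  cases n with
  | zero => exact hasDeg_congr hideg (by simp)
  | succ m =>
    refine hasDeg_sum fun c _ => ?_
    have hne := comp_blocks_ne_nil c
    have hsum := c.blocks_sum
    rcases hb : c.blocks with _ | ⟨b, bs⟩
    · exact absurd hb hne
    · rw [hb] at hsum
      have hd := hasDeg_comp (hasDeg_comp hideg (hasDeg_mcWord hΔdeg hhdeg bs b)) hhdeg
      refine hasDeg_congr hd ?_
      rw [List.sum_cons] at hsum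
      have hcast : (b : ℤ) + (bs.sum : ℤ) = (m : ℤ) + 1 := by exact_mod_cast hsum
      omega

end McTransferAux
end AuxLemmas

/-- the family `i_0 = i`, `i_n = ∑ h Δ_{i₁} h ⋯ h Δ_{i_k} i` is an
`∞`-morphism from `(H, Δ')` to `(A, Δ)`. -/
theorem transferred_iInfty_isInftyMorphism
    {A H : Type} [AddCommGroup A] [Module 𝕜 A] [AddCommGroup H] [Module 𝕜 H]
    (𝒜 : ℤ → Submodule 𝕜 A) (ℋ : ℤ → Submodule 𝕜 H)
    (h𝒜 : DirectSum.IsInternal 𝒜) (hℋ : DirectSum.IsInternal ℋ)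
    (Δ : ℕ → Module.End 𝕜 A) (hΔ : IsMulticomplex 𝕜 𝒜 Δ)
    (dH : Module.End 𝕜 H) (hdHdeg : HasDeg 𝕜 ℋ ℋ dH (-1)) (hdHsq : dH ∘ₗ dH = 0)
    (p : A →ₗ[𝕜] H) (i : H →ₗ[𝕜] A) (h : Module.End 𝕜 A)
    (hret : IsHomotopyRetract 𝕜 𝒜 ℋ (Δ 0) dH p i h) :
    IsInftyMorphism 𝕜 ℋ 𝒜 (transferredDelta 𝕜 Δ h p i dH) Δ
      (fun n => match n with
        | 0 => i
        | m + 1 => ∑ c : Composition (m + 1), h ∘ₗ mcWord 𝕜 Δ h c.blocks ∘ₗ i) := by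
  obtain ⟨hΔdeg, hΔrel⟩ := hΔ
  obtain ⟨hpdeg, hideg, hhdeg, hpch, hich, hqis, hhomot⟩ := hret
  have hfW : (fun n => match n with
      | 0 => i
      | m + 1 => ∑ c : Composition (m + 1), h ∘ₗ mcWord 𝕜 Δ h c.blocks ∘ₗ i)
      = McTransferAux.Wfun Δ h i := by
    funext n
    cases n <;> rfl
  rw [hfW]
  constructor
  · exact McTransferAux.Wfun_deg Δ h i 𝒜 ℋ hΔdeg hhdeg hideg
  · intro n
    exact McTransferAux.main Δ h i p dH hΔrel hich hhomot n
end

section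
/- Let (A, Δ_0, Δ_1, Δ_2, …) be a multicomplex, let (p, i, h) be a homotopy retract of (A, d = Δ_0) onto a chain complex (H, d_H), and endow H with the transferred multicomplex structure Δ′_n := Σ_{k≥1} Σ_{i_1+⋯+i_k = n, i_j ≥ 1} p Δ_{i_1} h Δ_{i_2} h ⋯ h Δ_{i_k} i (n ≥ 1), Δ′_0 := d_H. Then the family p_0 := p and p_n := Σ_{k≥1} Σ_{i_1+⋯+i_k = n, i_j ≥ 1} p Δ_{i_1} h Δ_{i_2} h ⋯ h Δ_{i_k} h (n ≥ 1) is an ∞-morphism from (A, Δ_•) to (H, Δ′_•), i.e. Σ_{k+l=n} p_k Δ_l = Σ_{k+l=n} Δ′_k p_l for all n ≥ 0. -/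
open Module LinearMap Finset

variable (𝕜 : Type) [Field 𝕜] [CharZero 𝕜]

section CompAux

lemma comp_blocks_eq_nil {m : ℕ} (hm : m = 0) (c : Composition m) : c.blocks = [] := by
  subst hm
  cases hb : c.blocks with
  | nil => rfl
  | cons a l =>
    have h1 := c.blocks_sum
    have h2 : 0 < a := c.blocks_pos (by rw [hb]; exact List.mem_cons_self)
    rw [hb] at h1; simp [List.sum_cons] at h1; omega

lemma comp_blocks_ne_nil {m : ℕ} (hm : 0 < m) (c : Composition m) : c.blocks ≠ [] := by
  intro hb; have := c.blocks_sum; rw [hb] at this; simp at this; omega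

lemma comp_head_facts {n : ℕ} (c : Composition (n+1)) :
    c.blocks = c.blocks.headI :: c.blocks.tail ∧ 0 < c.blocks.headI ∧
      c.blocks.headI + c.blocks.tail.sum = n + 1 := by
  obtain ⟨a, l, hb⟩ := List.exists_cons_of_ne_nil (comp_blocks_ne_nil (Nat.succ_pos n) c)
  have hs := c.blocks_sum
  rw [hb] at hs ⊢
  have hp : 0 < a := c.blocks_pos (by rw [hb]; exact List.mem_cons_self)
  exact ⟨rfl, hp, by simpa using hs⟩

/-- Split off the first block of a composition. -/
def splitAux {n : ℕ} (c : Composition (n+1)) : Σ j : ℕ, Composition (n - j) :=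
  ⟨c.blocks.headI - 1,
    ⟨c.blocks.tail, fun hi => c.blocks_pos (List.mem_of_mem_tail hi), by
      obtain ⟨-, h1, h2⟩ := comp_head_facts c; omega⟩⟩

/-- Prepend a block to a composition. -/
def unsplitAux {n : ℕ} (x : Σ j : ℕ, Composition (n - j)) : Composition (n+1) :=
  if hx : x.1 ≤ n then
    ⟨(x.1 + 1) :: x.2.blocks,
      fun hi => by
        rcases List.mem_cons.mp hi with rfl | hi
        · omega
        · exact x.2.blocks_pos hi,
      by have := x.2.blocks_sum; simp [List.sum_cons, this]; omega⟩
  else Composition.single (n+1) (Nat.succ_pos n)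

lemma sigma_comp_ext {n : ℕ} {x y : Σ j : ℕ, Composition (n - j)} (h1 : x.1 = y.1)
    (h2 : x.2.blocks = y.2.blocks) : x = y := by
  rcases x with ⟨a, c⟩; rcases y with ⟨b, d⟩
  dsimp at h1; cases h1
  exact Sigma.ext rfl (heq_of_eq (Composition.ext h2))

lemma sum_composition_split {M : Type*} [AddCommMonoid M] (n : ℕ) (f : List ℕ → M) :
    ∑ c : Composition (n+1), f c.blocks
      = (∑ j ∈ Finset.range n, ∑ c : Composition (n - j), f ((j+1) :: c.blocks)) + f [n+1] := by
  have key : ∑ c : Composition (n+1), f c.blocks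
      = ∑ j ∈ Finset.range (n+1), ∑ c : Composition (n - j), f ((j+1) :: c.blocks) := by
    rw [Finset.sum_sigma' (Finset.range (n+1))
      (fun j => (Finset.univ : Finset (Composition (n - j)))) (fun j c => f ((j+1) :: c.blocks))]
    refine Finset.sum_nbij' splitAux unsplitAux ?_ ?_ ?_ ?_ ?_
    · intro c _
      obtain ⟨hc, h1, h2⟩ := comp_head_facts c
      simp only [Finset.mem_sigma, Finset.mem_range, Finset.mem_univ, and_true, splitAux]
      omega
    · intro x _; exact Finset.mem_univ _
    · intro c _
      obtain ⟨hc, h1, h2⟩ := comp_head_facts c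
      have hx : c.blocks.headI - 1 ≤ n := by omega
      apply Composition.ext
      unfold unsplitAux
      rw [dif_pos (show (splitAux c).1 ≤ n from hx)]
      show (c.blocks.headI - 1 + 1) :: c.blocks.tail = c.blocks
      rw [show c.blocks.headI - 1 + 1 = c.blocks.headI by omega]
      exact hc.symm
    · rintro ⟨j, c⟩ hx
      simp only [Finset.mem_sigma, Finset.mem_range, Finset.mem_univ, and_true] at hx
      have hj : j ≤ n := by omega
      have hb : (unsplitAux ⟨j, c⟩).blocks = (j+1) :: c.blocks := by
        simp [unsplitAux, hj]
      refine sigma_comp_ext ?_ ?_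
      · simp [splitAux, hb]
      · simp [splitAux, hb]
    · intro c _
      obtain ⟨hc, h1, h2⟩ := comp_head_facts c
      simp only [splitAux]
      rw [show c.blocks.headI - 1 + 1 = c.blocks.headI by omega]
      exact congrArg f hc
  rw [key, Finset.sum_range_succ]
  congr 1
  have hu : ∀ c : Composition (n - n), f ((n+1) :: c.blocks) = f [n+1] := fun c => by
    rw [comp_blocks_eq_nil (Nat.sub_self n) c]
  rw [Finset.sum_congr rfl (fun c _ => hu c)]
  haveI : Unique (Composition (0 : ℕ)) :=
    ⟨⟨⟨[], by simp, by simp⟩⟩, fun c => Composition.ext (by simpa using comp_blocks_eq_nil rfl c)⟩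
  haveI : Unique (Composition (n - n)) := by rw [Nat.sub_self]; infer_instance
  simp

/-- Reversing blocks, as a map on compositions. -/
def compReverse {n : ℕ} (c : Composition n) : Composition n :=
  ⟨c.blocks.reverse, fun hi => c.blocks_pos (List.mem_reverse.mp hi),
    by rw [List.sum_reverse]; exact c.blocks_sum⟩

lemma sum_composition_reverse {M : Type*} [AddCommMonoid M] (n : ℕ) (f : List ℕ → M) :
    ∑ c : Composition n, f c.blocks = ∑ c : Composition n, f c.blocks.reverse := by
  refine Finset.sum_nbij' compReverse compReverse (fun _ _ => Finset.mem_univ _)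
    (fun _ _ => Finset.mem_univ _) ?_ ?_ ?_
  · intro c _; exact Composition.ext (by simp [compReverse])
  · intro c _; exact Composition.ext (by simp [compReverse])
  · intro c _; simp [compReverse]

lemma sum_range_reindex {M : Type*} [AddCommMonoid M] (n : ℕ) (g : ℕ → ℕ → M) :
    ∑ a ∈ Finset.range n, ∑ b ∈ Finset.range a, g a b
      = ∑ j ∈ Finset.range n, ∑ l ∈ Finset.range (n - j - 1), g (j + l + 1) j := by
  rw [Finset.sum_sigma' (Finset.range n) (fun a => Finset.range a) (fun a b => g a b),
    Finset.sum_sigma' (Finset.range n) (fun j => Finset.range (n - j - 1))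
      (fun j l => g (j + l + 1) j)]
  refine Finset.sum_nbij' (fun x => ⟨x.2, x.1 - x.2 - 1⟩) (fun x => ⟨x.1 + x.2 + 1, x.1⟩)
    ?_ ?_ ?_ ?_ ?_
  · rintro ⟨a, b⟩ hx
    simp only [Finset.mem_sigma, Finset.mem_range] at hx ⊢
    omega
  · rintro ⟨j, l⟩ hx
    simp only [Finset.mem_sigma, Finset.mem_range] at hx ⊢
    omega
  · rintro ⟨a, b⟩ hx
    simp only [Finset.mem_sigma, Finset.mem_range] at hx
    exact Sigma.ext (by dsimp; omega) (heq_of_eq rfl)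
  · rintro ⟨j, l⟩ hx
    simp only [Finset.mem_sigma, Finset.mem_range] at hx
    exact Sigma.ext rfl (heq_of_eq (by dsimp; omega))
  · rintro ⟨a, b⟩ hx
    simp only [Finset.mem_sigma, Finset.mem_range] at hx
    have : b + (a - b - 1) + 1 = a := by omega
    rw [this]

end CompAux
section WordAux

variable {𝕜 : Type} [Field 𝕜] {A : Type} [AddCommGroup A] [Module 𝕜 A]
variable (Δ : ℕ → Module.End 𝕜 A) (h : Module.End 𝕜 A)

lemma mcWord_cons (a : ℕ) {l : List ℕ} (hl : l ≠ []) :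
    mcWord 𝕜 Δ h (a :: l) = Δ a * h * mcWord 𝕜 Δ h l := by
  cases l with
  | nil => exact absurd rfl hl
  | cons b t => rfl

lemma mcWord_concat (a : ℕ) {l : List ℕ} (hl : l ≠ []) :
    mcWord 𝕜 Δ h (l ++ [a]) = mcWord 𝕜 Δ h l * h * Δ a := by
  induction l with
  | nil => exact absurd rfl hl
  | cons b t ih =>
    cases t with
    | nil => rfl
    | cons c tt =>
      rw [List.cons_append, mcWord_cons Δ h b (by simp), ih (by simp),
        mcWord_cons Δ h b (by simp)]
      noncomm_ring

/-- `Pword n = ∑_{i₁+⋯+i_k = n} Δ_{i₁} h ⋯ h Δ_{i_k}`. -/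
noncomputable def Pword (n : ℕ) : Module.End 𝕜 A :=
  ∑ c : Composition n, mcWord 𝕜 Δ h c.blocks

lemma Pword_first (n : ℕ) :
    Pword Δ h (n+1) = Δ (n+1) + ∑ j ∈ Finset.range n, Δ (j+1) * h * Pword Δ h (n - j) := by
  rw [Pword, sum_composition_split n (mcWord 𝕜 Δ h), add_comm]
  congr 1
  · refine Finset.sum_congr rfl fun j hj => ?_
    rw [Finset.mem_range] at hj
    rw [Pword, Finset.mul_sum]
    refine Finset.sum_congr rfl fun c _ => ?_
    rw [mcWord_cons Δ h (j+1) (comp_blocks_ne_nil (by omega) c)]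

lemma Pword_last (n : ℕ) :
    Pword Δ h (n+1) = Δ (n+1) + ∑ j ∈ Finset.range n, Pword Δ h (n - j) * h * Δ (j+1) := by
  rw [Pword, sum_composition_reverse,
    sum_composition_split n (fun l => mcWord 𝕜 Δ h l.reverse), add_comm]
  congr 1
  · refine Finset.sum_congr rfl fun j hj => ?_
    rw [Finset.mem_range] at hj
    have : ∀ c : Composition (n - j),
        mcWord 𝕜 Δ h (((j+1) :: c.blocks).reverse)
          = mcWord 𝕜 Δ h c.blocks.reverse * h * Δ (j+1) := by
      intro c
      rw [List.reverse_cons, mcWord_concat Δ h (j+1)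
        (by simpa using comp_blocks_ne_nil (by omega) c)]
    rw [Finset.sum_congr rfl fun c _ => this c, ← Finset.sum_mul, ← Finset.sum_mul,
      ← sum_composition_reverse, ← Pword]

end WordAux
section StarAux

variable {𝕜 : Type} [Field 𝕜] {A : Type} [AddCommGroup A] [Module 𝕜 A]
variable (Δ : ℕ → Module.End 𝕜 A) (h e : Module.End 𝕜 A)

lemma aux_rearrange (x y z : Module.End 𝕜 A) (H : (y + z) + x = 0) : x = -z - y := by
  have hx : x = -(y + z) := eq_neg_of_add_eq_zero_right H
  rw [hx]; abel

lemma aux_dDelta (hmc : ∀ m, ∑ i ∈ Finset.range (m+1), Δ i * Δ (m-i) = 0) (m : ℕ) :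
    Δ 0 * Δ (m+1) = -(Δ (m+1) * Δ 0) - ∑ i ∈ Finset.range m, Δ (i+1) * Δ (m-i) := by
  have H := hmc (m+1)
  rw [Finset.sum_range_succ', Finset.sum_range_succ] at H
  simp only [Nat.add_sub_add_right, Nat.sub_zero, Nat.sub_self] at H
  exact aux_rearrange _ _ _ H

lemma aux_I1 (n : ℕ) :
    ∑ j ∈ Finset.range n, Δ (j+1) * Pword Δ h (n - j)
      = ∑ i ∈ Finset.range n, Δ (i+1) * Δ (n-i)
        + ∑ j ∈ Finset.range n,
            (∑ i ∈ Finset.range j, Δ (i+1) * Δ (j-i)) * h * Pword Δ h (n - j) := by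
  have hP : ∀ j, j < n → Pword Δ h (n - j)
      = Δ (n-j) + ∑ l ∈ Finset.range (n-j-1), Δ (l+1) * h * Pword Δ h (n-j-1-l) := by
    intro j hj
    have h1 : n - j = (n - j - 1) + 1 := by omega
    rw [h1, Pword_first, ← h1]
  have step1 : ∑ j ∈ Finset.range n, Δ (j+1) * Pword Δ h (n - j)
      = ∑ j ∈ Finset.range n, Δ (j+1) * Δ (n-j)
        + ∑ j ∈ Finset.range n, ∑ l ∈ Finset.range (n-j-1),
            Δ (j+1) * (Δ (l+1) * h * Pword Δ h (n-j-1-l)) := by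
    rw [← Finset.sum_add_distrib]
    refine Finset.sum_congr rfl fun j hj => ?_
    rw [Finset.mem_range] at hj
    rw [hP j hj, mul_add, Finset.mul_sum]
  have step2 : ∑ j ∈ Finset.range n,
        (∑ i ∈ Finset.range j, Δ (i+1) * Δ (j-i)) * h * Pword Δ h (n - j)
      = ∑ j ∈ Finset.range n, ∑ l ∈ Finset.range (n-j-1),
            Δ (j+1) * (Δ (l+1) * h * Pword Δ h (n-j-1-l)) := by
    have e1 : ∀ j ∈ Finset.range n,
        (∑ i ∈ Finset.range j, Δ (i+1) * Δ (j-i)) * h * Pword Δ h (n - j)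
          = ∑ i ∈ Finset.range j, Δ (i+1) * Δ (j-i) * h * Pword Δ h (n - j) := by
      intro j _
      rw [Finset.sum_mul, Finset.sum_mul]
    rw [Finset.sum_congr rfl e1,
      sum_range_reindex n (fun a b => Δ (b+1) * Δ (a-b) * h * Pword Δ h (n - a))]
    refine Finset.sum_congr rfl fun j hj => Finset.sum_congr rfl fun l hl => ?_
    rw [Finset.mem_range] at hj hl
    rw [show j + l + 1 - j = l + 1 by omega, show n - (j + l + 1) = n - j - 1 - l by omega]
    noncomm_ring
  rw [step1, step2]

lemma aux_I2 (n : ℕ) :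
    ∑ k ∈ Finset.range n, Pword Δ h (k+1) * e * Pword Δ h (n - k)
      = ∑ j ∈ Finset.range n, Δ (j+1) * e * Pword Δ h (n - j)
        + ∑ j ∈ Finset.range n, ∑ k ∈ Finset.range (n-j-1),
            Δ (j+1) * h * (Pword Δ h (k+1) * e * Pword Δ h (n-j-1-k)) := by
  have step1 : ∑ k ∈ Finset.range n, Pword Δ h (k+1) * e * Pword Δ h (n - k)
      = ∑ k ∈ Finset.range n, Δ (k+1) * e * Pword Δ h (n - k)
        + ∑ k ∈ Finset.range n, ∑ j ∈ Finset.range k,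
            Δ (j+1) * h * Pword Δ h (k-j) * e * Pword Δ h (n - k) := by
    rw [← Finset.sum_add_distrib]
    refine Finset.sum_congr rfl fun k _ => ?_
    rw [Pword_first, add_mul, add_mul, Finset.sum_mul, Finset.sum_mul]
  have step2 : ∑ k ∈ Finset.range n, ∑ j ∈ Finset.range k,
        Δ (j+1) * h * Pword Δ h (k-j) * e * Pword Δ h (n - k)
      = ∑ j ∈ Finset.range n, ∑ k ∈ Finset.range (n-j-1),
            Δ (j+1) * h * (Pword Δ h (k+1) * e * Pword Δ h (n-j-1-k)) := by
    rw [sum_range_reindex n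
      (fun a b => Δ (b+1) * h * Pword Δ h (a-b) * e * Pword Δ h (n - a))]
    refine Finset.sum_congr rfl fun j hj => Finset.sum_congr rfl fun l hl => ?_
    rw [Finset.mem_range] at hj hl
    rw [show j + l + 1 - j = l + 1 by omega, show n - (j + l + 1) = n - j - 1 - l by omega]
    noncomm_ring
  rw [step1, step2]

lemma aux_star (hmc : ∀ m, ∑ i ∈ Finset.range (m+1), Δ i * Δ (m-i) = 0)
    (he : e = 1 + Δ 0 * h + h * Δ 0) :
    ∀ n : ℕ, Δ 0 * Pword Δ h (n+1) + Pword Δ h (n+1) * Δ 0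
      + ∑ k ∈ Finset.range n, Pword Δ h (k+1) * e * Pword Δ h (n - k) = 0 := by
  have hdh : Δ 0 * h = e - 1 - h * Δ 0 := by rw [he]; abel
  intro n
  induction n using Nat.strong_induction_on with
  | _ n IH =>
    have hIH : ∀ j, j < n → Δ 0 * Pword Δ h (n - j)
        = -(Pword Δ h (n - j) * Δ 0)
          - ∑ k ∈ Finset.range (n-j-1), Pword Δ h (k+1) * e * Pword Δ h (n-j-1-k) := by
      intro j hj
      have h1 : n - j = (n - j - 1) + 1 := by omega
      have H := IH (n - j - 1) (by omega)
      rw [← h1] at H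
      exact aux_rearrange _ _ _ (by rw [← H]; abel)
    have hT : ∀ j ∈ Finset.range n, (Δ 0 * Δ (j+1)) * (h * Pword Δ h (n - j))
        = -(Δ (j+1) * h * Pword Δ h (n-j) * Δ 0)
          - (∑ i ∈ Finset.range j, Δ (i+1) * Δ (j-i)) * h * Pword Δ h (n-j)
          - Δ (j+1) * e * Pword Δ h (n-j)
          + Δ (j+1) * Pword Δ h (n-j)
          - Δ (j+1) * h *
              (∑ k ∈ Finset.range (n-j-1), Pword Δ h (k+1) * e * Pword Δ h (n-j-1-k)) := by
      intro j hj
      rw [Finset.mem_range] at hj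
      calc (Δ 0 * Δ (j+1)) * (h * Pword Δ h (n - j))
          = (-(Δ (j+1) * Δ 0) - ∑ i ∈ Finset.range j, Δ (i+1) * Δ (j-i))
              * (h * Pword Δ h (n - j)) := by rw [aux_dDelta Δ hmc j]
        _ = -(Δ (j+1) * ((Δ 0 * h) * Pword Δ h (n - j)))
              - (∑ i ∈ Finset.range j, Δ (i+1) * Δ (j-i)) * h * Pword Δ h (n-j) := by
            noncomm_ring
        _ = -(Δ (j+1) * ((e - 1 - h * Δ 0) * Pword Δ h (n - j)))
              - (∑ i ∈ Finset.range j, Δ (i+1) * Δ (j-i)) * h * Pword Δ h (n-j) := by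
            rw [hdh]
        _ = -(Δ (j+1) * e * Pword Δ h (n-j)) + Δ (j+1) * Pword Δ h (n-j)
              + Δ (j+1) * h * (Δ 0 * Pword Δ h (n-j))
              - (∑ i ∈ Finset.range j, Δ (i+1) * Δ (j-i)) * h * Pword Δ h (n-j) := by
            noncomm_ring
        _ = -(Δ (j+1) * e * Pword Δ h (n-j)) + Δ (j+1) * Pword Δ h (n-j)
              + Δ (j+1) * h * (-(Pword Δ h (n - j) * Δ 0)
                - ∑ k ∈ Finset.range (n-j-1), Pword Δ h (k+1) * e * Pword Δ h (n-j-1-k))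
              - (∑ i ∈ Finset.range j, Δ (i+1) * Δ (j-i)) * h * Pword Δ h (n-j) := by
            rw [hIH j hj]
        _ = _ := by noncomm_ring
    have hmain : Δ 0 * Pword Δ h (n+1)
        = Δ 0 * Δ (n+1)
          + ∑ j ∈ Finset.range n, (Δ 0 * Δ (j+1)) * (h * Pword Δ h (n - j)) := by
      rw [Pword_first, mul_add, Finset.mul_sum]
      exact congrArg _ (Finset.sum_congr rfl fun j _ => by noncomm_ring)
    rw [hmain, Finset.sum_congr rfl hT, aux_dDelta Δ hmc n, Pword_first, add_mul,
      Finset.sum_mul]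
    simp only [Finset.sum_sub_distrib, Finset.sum_add_distrib, Finset.sum_neg_distrib]
    rw [aux_I1 Δ h n, aux_I2 Δ h e n,
      Finset.sum_congr rfl (fun j _ => Finset.mul_sum (Finset.range (n-j-1))
        (fun k => Pword Δ h (k+1) * e * Pword Δ h (n-j-1-k)) (Δ (j+1) * h))]
    abel

end StarAux
section DegAux

variable {𝕜 : Type} [Field 𝕜]
variable {A B C : Type} [AddCommGroup A] [Module 𝕜 A] [AddCommGroup B] [Module 𝕜 B]
  [AddCommGroup C] [Module 𝕜 C]

lemma hasDeg_congr {𝒜 : ℤ → Submodule 𝕜 A} {ℬ : ℤ → Submodule 𝕜 B}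
    {f : A →ₗ[𝕜] B} {m m' : ℤ} (hf : HasDeg 𝕜 𝒜 ℬ f m) (hm : m = m') :
    HasDeg 𝕜 𝒜 ℬ f m' := hm ▸ hf

lemma hasDeg_comp {𝒜 : ℤ → Submodule 𝕜 A} {ℬ : ℤ → Submodule 𝕜 B} {𝒞 : ℤ → Submodule 𝕜 C}
    {f : A →ₗ[𝕜] B} {g : B →ₗ[𝕜] C} {m l : ℤ}
    (hf : HasDeg 𝕜 𝒜 ℬ f m) (hg : HasDeg 𝕜 ℬ 𝒞 g l) : HasDeg 𝕜 𝒜 𝒞 (g ∘ₗ f) (m + l) := by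
  intro j x hx
  rw [Submodule.mem_map] at hx
  obtain ⟨y, hy, rfl⟩ := hx
  have h1 : f y ∈ ℬ (j + m) := hf j (Submodule.mem_map_of_mem hy)
  have h2 : g (f y) ∈ 𝒞 (j + m + l) := hg (j + m) (Submodule.mem_map_of_mem h1)
  have h3 : j + m + l = j + (m + l) := by ring
  rw [h3] at h2
  exact h2

lemma hasDeg_sum {𝒜 : ℤ → Submodule 𝕜 A} {ℬ : ℤ → Submodule 𝕜 B}
    {ι : Type*} (s : Finset ι) (f : ι → (A →ₗ[𝕜] B)) (m : ℤ)
    (hf : ∀ x ∈ s, HasDeg 𝕜 𝒜 ℬ (f x) m) : HasDeg 𝕜 𝒜 ℬ (∑ x ∈ s, f x) m := by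
  intro j z hz
  rw [Submodule.mem_map] at hz
  obtain ⟨y, hy, rfl⟩ := hz
  rw [LinearMap.sum_apply]
  exact Submodule.sum_mem _ fun x hx => hf x hx j (Submodule.mem_map_of_mem hy)

lemma mcWord_deg {𝒜 : ℤ → Submodule 𝕜 A} {Δ : ℕ → Module.End 𝕜 A} {h : Module.End 𝕜 A}
    (hΔ : ∀ n : ℕ, HasDeg 𝕜 𝒜 𝒜 (Δ n) (2 * (n:ℤ) - 1)) (hh : HasDeg 𝕜 𝒜 𝒜 h 1) :
    ∀ l : List ℕ, l ≠ [] → HasDeg 𝕜 𝒜 𝒜 (mcWord 𝕜 Δ h l) (2 * (l.sum : ℤ) - 1)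
  | [], hne => absurd rfl hne
  | [a], _ => by show HasDeg 𝕜 𝒜 𝒜 (Δ a) _; simpa using hΔ a
  | (a :: b :: t), _ => by
    have IH := mcWord_deg hΔ hh (b :: t) (by simp)
    have h1 := hasDeg_comp (hasDeg_comp IH hh) (hΔ a)
    have h2 : HasDeg 𝕜 𝒜 𝒜 (mcWord 𝕜 Δ h (a :: b :: t))
        (2 * ((b :: t).sum : ℤ) - 1 + 1 + (2 * (a : ℤ) - 1)) := by
      show HasDeg 𝕜 𝒜 𝒜 (Δ a * h * mcWord 𝕜 Δ h (b :: t)) _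
      simpa only [Module.End.mul_eq_comp, LinearMap.comp_assoc] using h1
    refine hasDeg_congr h2 ?_
    have : ((a :: b :: t).sum : ℤ) = (a : ℤ) + ((b :: t).sum : ℤ) := by
      push_cast [List.sum_cons]; ring
    rw [this]; ring

end DegAux

section MainAux

variable {𝕜 : Type} [Field 𝕜] {A H : Type} [AddCommGroup A] [Module 𝕜 A]
  [AddCommGroup H] [Module 𝕜 H]

/-- The maps `p_n` of the transferred `∞`-morphism, in closed form. -/
noncomputable def pAux (Δ : ℕ → Module.End 𝕜 A) (h : Module.End 𝕜 A)
    (p : A →ₗ[𝕜] H) : ℕ → (A →ₗ[𝕜] H)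
  | 0 => p
  | m + 1 => ∑ c : Composition (m + 1), p ∘ₗ mcWord 𝕜 Δ h c.blocks ∘ₗ h

lemma pAux_succ (Δ : ℕ → Module.End 𝕜 A) (h : Module.End 𝕜 A) (p : A →ₗ[𝕜] H) (m : ℕ) :
    pAux Δ h p (m+1) = p ∘ₗ (Pword Δ h (m+1) * h : Module.End 𝕜 A) := by
  show (∑ c : Composition (m + 1), p ∘ₗ mcWord 𝕜 Δ h c.blocks ∘ₗ h) = _
  rw [Pword]
  ext x
  simp [LinearMap.sum_apply, Module.End.mul_apply, map_sum]

lemma tdelta_succ (Δ : ℕ → Module.End 𝕜 A) (h : Module.End 𝕜 A) (p : A →ₗ[𝕜] H)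
    (i : H →ₗ[𝕜] A) (dH : Module.End 𝕜 H) (m : ℕ) :
    transferredDelta 𝕜 Δ h p i dH (m+1)
      = p ∘ₗ ((Pword Δ h (m+1) : Module.End 𝕜 A) ∘ₗ i) := by
  show (∑ c : Composition (m + 1), p ∘ₗ mcWord 𝕜 Δ h c.blocks ∘ₗ i) = _
  rw [Pword]
  ext x
  simp [LinearMap.sum_apply, map_sum]

lemma key_ring (P S dd hh E : Module.End 𝕜 A) (h1 : dd * P + P * dd + S = 0)
    (h2 : E = 1 + dd * hh + hh * dd) :
    P + P * hh * dd = dd * (P * hh) + S * hh + P * E := by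
  rw [h2, ← sub_eq_zero]
  have h3 : P + P * hh * dd - (dd * (P * hh) + S * hh + P * (1 + dd * hh + hh * dd))
      = -((dd * P + P * dd + S) * hh) := by noncomm_ring
  rw [h3, h1, zero_mul, neg_zero]

end MainAux
/-- the family `p_0 = p`, `p_n = ∑ p Δ_{i₁} h ⋯ h Δ_{i_k} h` is an
`∞`-morphism from `(A, Δ)` to `(H, Δ')`. -/
theorem transferred_pInfty_isInftyMorphism
    {A H : Type} [AddCommGroup A] [Module 𝕜 A] [AddCommGroup H] [Module 𝕜 H]
    (𝒜 : ℤ → Submodule 𝕜 A) (ℋ : ℤ → Submodule 𝕜 H)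
    (h𝒜 : DirectSum.IsInternal 𝒜) (hℋ : DirectSum.IsInternal ℋ)
    (Δ : ℕ → Module.End 𝕜 A) (hΔ : IsMulticomplex 𝕜 𝒜 Δ)
    (dH : Module.End 𝕜 H) (hdHdeg : HasDeg 𝕜 ℋ ℋ dH (-1)) (hdHsq : dH ∘ₗ dH = 0)
    (p : A →ₗ[𝕜] H) (i : H →ₗ[𝕜] A) (h : Module.End 𝕜 A)
    (hret : IsHomotopyRetract 𝕜 𝒜 ℋ (Δ 0) dH p i h) :
    IsInftyMorphism 𝕜 𝒜 ℋ Δ (transferredDelta 𝕜 Δ h p i dH)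
      (fun n => match n with
        | 0 => p
        | m + 1 => ∑ c : Composition (m + 1), p ∘ₗ mcWord 𝕜 Δ h c.blocks ∘ₗ h) := by
  obtain ⟨hpdeg, hideg, hhdeg, hpd, hid, hquasi, hhom⟩ := hret
  have hmc : ∀ m, ∑ k ∈ Finset.range (m+1), Δ k * Δ (m-k) = 0 := by
    intro m
    simpa only [Module.End.mul_eq_comp] using hΔ.2 m
  have he : (i ∘ₗ p : Module.End 𝕜 A) = 1 + Δ 0 * h + h * Δ 0 := by
    rw [sub_eq_iff_eq_add] at hhom
    rw [hhom]
    simp only [Module.End.mul_eq_comp, Module.End.one_eq_id]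
    abel
  refine ⟨?_, ?_⟩
  · -- degrees
    intro n
    cases n with
    | zero =>
      show HasDeg 𝕜 𝒜 ℋ p (2 * ((0:ℕ) : ℤ))
      exact hasDeg_congr hpdeg (by norm_num)
    | succ m =>
      show HasDeg 𝕜 𝒜 ℋ (∑ c : Composition (m+1), p ∘ₗ mcWord 𝕜 Δ h c.blocks ∘ₗ h)
        (2 * ((m+1:ℕ) : ℤ))
      refine hasDeg_sum _ _ _ fun c _ => ?_
      have hw := mcWord_deg hΔ.1 hhdeg c.blocks (comp_blocks_ne_nil (Nat.succ_pos m) c)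
      have h1 := hasDeg_comp (hasDeg_comp hhdeg hw) hpdeg
      refine hasDeg_congr h1 ?_
      have hs : (c.blocks.sum : ℤ) = ((m+1 : ℕ) : ℤ) := by
        exact_mod_cast congrArg (Nat.cast : ℕ → ℤ) c.blocks_sum
      rw [hs]; push_cast; ring
  · -- the ∞-morphism equations
    show ∀ n, ∑ k ∈ Finset.range (n+1), pAux Δ h p k ∘ₗ Δ (n-k)
        = ∑ k ∈ Finset.range (n+1), transferredDelta 𝕜 Δ h p i dH k ∘ₗ pAux Δ h p (n-k)
    intro n
    cases n with
    | zero =>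
      simp only [zero_add, Finset.sum_range_one]
      exact hpd
    | succ n =>
      have hL : ∑ k ∈ Finset.range (n+1+1), pAux Δ h p k ∘ₗ Δ (n+1-k)
          = p ∘ₗ (Pword Δ h (n+1) + Pword Δ h (n+1) * h * Δ 0 : Module.End 𝕜 A) := by
        rw [Finset.sum_range_succ']
        simp only [Nat.add_sub_add_right, Nat.sub_zero]
        have e1 : ∀ k ∈ Finset.range (n+1), pAux Δ h p (k+1) ∘ₗ Δ (n-k)
            = p ∘ₗ (Pword Δ h (k+1) * h * Δ (n-k) : Module.End 𝕜 A) := by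
          intro k _
          rw [pAux_succ]
          ext x; simp [Module.End.mul_apply]
        rw [Finset.sum_congr rfl e1]
        have e2 : (∑ k ∈ Finset.range (n+1),
              p ∘ₗ (Pword Δ h (k+1) * h * Δ (n-k) : Module.End 𝕜 A))
              + pAux Δ h p 0 ∘ₗ Δ (n+1)
            = p ∘ₗ ((∑ k ∈ Finset.range (n+1), Pword Δ h (k+1) * h * Δ (n-k)) + Δ (n+1) :
                Module.End 𝕜 A) := by
          ext x
          simp [LinearMap.sum_apply, Module.End.mul_apply, pAux]
        rw [e2]
        refine congrArg _ ?_
        rw [Finset.sum_range_succ, Nat.sub_self]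
        have hrefl : ∀ j ∈ Finset.range n, Pword Δ h (n-(n-1-j)) * h * Δ ((n-1-j)+1)
            = Pword Δ h (j+1) * h * Δ (n-j) := by
          intro j hj; rw [Finset.mem_range] at hj
          rw [show n - (n-1-j) = j + 1 by omega, show n - 1 - j + 1 = n - j by omega]
        have hs2 : ∑ x ∈ Finset.range n, Pword Δ h (x+1) * h * Δ (n-x)
            = ∑ j ∈ Finset.range n, Pword Δ h (n-j) * h * Δ (j+1) := by
          rw [← Finset.sum_range_reflect (fun j => Pword Δ h (n-j) * h * Δ (j+1)) n]
          exact (Finset.sum_congr rfl hrefl).symm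
        rw [hs2, Pword_last Δ h n]
        abel
      have hR : ∑ k ∈ Finset.range (n+1+1), transferredDelta 𝕜 Δ h p i dH k ∘ₗ pAux Δ h p (n+1-k)
          = p ∘ₗ (Δ 0 * (Pword Δ h (n+1) * h)
              + (∑ k ∈ Finset.range n, Pword Δ h (k+1) * (i ∘ₗ p) * Pword Δ h (n-k)) * h
              + Pword Δ h (n+1) * (i ∘ₗ p) : Module.End 𝕜 A) := by
        rw [Finset.sum_range_succ']
        simp only [Nat.add_sub_add_right, Nat.sub_zero]
        rw [Finset.sum_range_succ]
        have e1 : ∀ k ∈ Finset.range n,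
            transferredDelta 𝕜 Δ h p i dH (k+1) ∘ₗ pAux Δ h p (n-k)
              = p ∘ₗ (Pword Δ h (k+1) * (i ∘ₗ p) * Pword Δ h (n-k) * h : Module.End 𝕜 A) := by
          intro k hk; rw [Finset.mem_range] at hk
          rw [tdelta_succ, show n - k = (n-k-1)+1 by omega, pAux_succ,
            show (n-k-1)+1 = n-k by omega]
          ext x; simp [Module.End.mul_apply]
        have e2 : transferredDelta 𝕜 Δ h p i dH (n+1) ∘ₗ pAux Δ h p (n-n)
            = p ∘ₗ (Pword Δ h (n+1) * (i ∘ₗ p) : Module.End 𝕜 A) := by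
          rw [Nat.sub_self, tdelta_succ]
          ext x; simp [Module.End.mul_apply, pAux]
        have e3 : transferredDelta 𝕜 Δ h p i dH 0 ∘ₗ pAux Δ h p (n+1)
            = p ∘ₗ (Δ 0 * (Pword Δ h (n+1) * h) : Module.End 𝕜 A) := by
          rw [pAux_succ]
          show dH ∘ₗ _ = _
          ext x
          have hy := LinearMap.ext_iff.mp hpd ((Pword Δ h (n+1) * h) x)
          simp only [LinearMap.comp_apply, Module.End.mul_apply] at hy ⊢
          exact hy.symm
        rw [Finset.sum_congr rfl e1, e2, e3]
        have e4 : p ∘ₗ ((∑ k ∈ Finset.range n, Pword Δ h (k+1) * (i ∘ₗ p) * Pword Δ h (n-k)) * h :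
              Module.End 𝕜 A)
            = ∑ k ∈ Finset.range n,
                p ∘ₗ (Pword Δ h (k+1) * (i ∘ₗ p) * Pword Δ h (n-k) * h : Module.End 𝕜 A) := by
          ext x
          simp [Finset.sum_mul, LinearMap.sum_apply, Module.End.mul_apply]
        rw [LinearMap.comp_add, LinearMap.comp_add, e4]
        abel
      rw [hL, hR]
      exact congrArg (fun X : Module.End 𝕜 A => p ∘ₗ X)
        (key_ring (Pword Δ h (n+1)) _ (Δ 0) h (i ∘ₗ p) (aux_star Δ h (i ∘ₗ p) hmc he n) he)
end

section
/- Let f : (A, Δ_•) ⇝ (A′, Δ′_•) be an ∞-morphism of multicomplexes whose component f_0 : A → A′ is an isomorphism of graded vector spaces (an ∞-isomorphism). Then f is invertible: there exists an ∞-morphism g : (A′, Δ′_•) ⇝ (A, Δ_•) such that the composites satisfy (gf)_0 = id_A, (fg)_0 = id_{A′}, and (gf)_n = 0, (fg)_n = 0 for all n ≥ 1, where (gf)_n := Σ_{k+l=n} g_k f_l. -/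
open Module LinearMap Finset

variable (𝕜 : Type) [Field 𝕜] [CharZero 𝕜]

section AuxInvert

lemma mem_graded_of_map_mem {A A' : Type} [AddCommGroup A] [Module 𝕜 A]
    [AddCommGroup A'] [Module 𝕜 A']
    {𝒜 : ℤ → Submodule 𝕜 A} {𝒜' : ℤ → Submodule 𝕜 A'}
    (h𝒜 : DirectSum.IsInternal 𝒜) (h𝒜' : DirectSum.IsInternal 𝒜')
    (f0 : A →ₗ[𝕜] A') (hinj : Function.Injective f0)
    (hdeg : ∀ i : ℤ, ∀ x ∈ 𝒜 i, f0 x ∈ 𝒜' i)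
    {j : ℤ} {x : A} (hx : f0 x ∈ 𝒜' j) : x ∈ 𝒜 j := by
  obtain ⟨hind, hsup⟩ :=
    (DirectSum.isInternal_submodule_iff_iSupIndep_and_iSup_eq_top 𝒜).mp h𝒜
  obtain ⟨hind', -⟩ :=
    (DirectSum.isInternal_submodule_iff_iSupIndep_and_iSup_eq_top 𝒜').mp h𝒜'
  have hx' : x ∈ iSup 𝒜 := hsup ▸ Submodule.mem_top
  rw [Submodule.mem_iSup_iff_exists_dfinsupp] at hx'
  obtain ⟨v, hv⟩ := hx'
  set Fi : ∀ i : ℤ, 𝒜 i →ₗ[𝕜] 𝒜' i := fun i => f0.restrict (hdeg i) with hFi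
  have key : ∀ w : Π₀ i, ↥(𝒜 i),
      DFinsupp.lsum ℕ (M := fun i ↦ ↥(𝒜' i)) (fun i => (𝒜' i).subtype)
        (DFinsupp.mapRange.linearMap Fi w) =
      f0 (DFinsupp.lsum ℕ (M := fun i ↦ ↥(𝒜 i)) (fun i => (𝒜 i).subtype) w) := by
    intro w
    induction w using DFinsupp.induction with
    | h0 => simp
    | ha i a w _ _ ih =>
      simp only [map_add, ih]
      simp [hFi, LinearMap.restrict_apply]
  have heq : DFinsupp.mapRange.linearMap Fi v = DFinsupp.single j (⟨f0 x, hx⟩ : 𝒜' j) := by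
    apply hind'.dfinsupp_lsum_injective
    rw [key, hv, DFinsupp.lsum_single]
    rfl
  have hzero : ∀ k, k ≠ j → v k = 0 := by
    intro k hk
    have := DFunLike.congr_fun heq k
    rw [DFinsupp.mapRange.linearMap_apply, DFinsupp.mapRange_apply,
      DFinsupp.single_eq_of_ne hk] at this
    have : f0 (v k) = 0 := congrArg Subtype.val this
    have h2 : f0 ((v k : A)) = f0 0 := by simpa using this
    exact Subtype.ext (by simpa using hinj h2)
  have hvs : v = DFinsupp.single j (v j) := by
    ext k
    by_cases hk : k = j
    · subst hk; simp
    · rw [hzero k hk, DFinsupp.single_eq_of_ne hk]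
  rw [← hv, hvs, DFinsupp.lsum_single]
  exact Submodule.coe_mem _

/-- Left inverse coefficients. -/
noncomputable def leftInvSeq {A A' : Type} [AddCommGroup A] [Module 𝕜 A]
    [AddCommGroup A'] [Module 𝕜 A']
    (e' : A' →ₗ[𝕜] A) (f : ℕ → (A →ₗ[𝕜] A')) : ℕ → (A' →ₗ[𝕜] A)
  | 0 => e'
  | n + 1 =>
      -((∑ k ∈ (Finset.range (n + 1)).attach,
          leftInvSeq e' f k ∘ₗ f (n + 1 - (k : ℕ))) ∘ₗ e')
  decreasing_by exact Nat.lt_succ_of_le (Finset.mem_range_succ_iff.mp k.2)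

/-- Right inverse coefficients. -/
noncomputable def rightInvSeq {A A' : Type} [AddCommGroup A] [Module 𝕜 A]
    [AddCommGroup A'] [Module 𝕜 A']
    (e' : A' →ₗ[𝕜] A) (f : ℕ → (A →ₗ[𝕜] A')) : ℕ → (A' →ₗ[𝕜] A)
  | 0 => e'
  | n + 1 =>
      -(e' ∘ₗ ∑ k ∈ (Finset.range (n + 1)).attach,
          f (n + 1 - (k : ℕ)) ∘ₗ rightInvSeq e' f k)
  decreasing_by exact Nat.lt_succ_of_le (Finset.mem_range_succ_iff.mp k.2)

lemma leftInvSeq_spec {A A' : Type} [AddCommGroup A] [Module 𝕜 A]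
    [AddCommGroup A'] [Module 𝕜 A']
    (e' : A' →ₗ[𝕜] A) (f : ℕ → (A →ₗ[𝕜] A')) (h0 : e' ∘ₗ f 0 = LinearMap.id) (n : ℕ) :
    ∑ k ∈ Finset.range (n + 1), leftInvSeq 𝕜 e' f k ∘ₗ f (n - k) =
      if n = 0 then LinearMap.id else 0 := by
  cases n with
  | zero => simpa [leftInvSeq] using h0
  | succ n =>
    rw [Finset.sum_range_succ]
    have h1 : leftInvSeq 𝕜 e' f (n + 1) ∘ₗ f (n + 1 - (n + 1)) =
        -(∑ k ∈ Finset.range (n + 1), leftInvSeq 𝕜 e' f k ∘ₗ f (n + 1 - k)) := by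
      rw [Nat.sub_self, leftInvSeq]
      rw [Finset.sum_attach (Finset.range (n + 1))
        (fun k => leftInvSeq 𝕜 e' f k ∘ₗ f (n + 1 - k))]
      rw [neg_comp, comp_assoc, h0, comp_id]
    rw [h1]
    simp

lemma rightInvSeq_spec {A A' : Type} [AddCommGroup A] [Module 𝕜 A]
    [AddCommGroup A'] [Module 𝕜 A']
    (e' : A' →ₗ[𝕜] A) (f : ℕ → (A →ₗ[𝕜] A')) (h0 : f 0 ∘ₗ e' = LinearMap.id) (n : ℕ) :
    ∑ k ∈ Finset.range (n + 1), f k ∘ₗ rightInvSeq 𝕜 e' f (n - k) =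
      if n = 0 then LinearMap.id else 0 := by
  cases n with
  | zero => simpa [rightInvSeq] using h0
  | succ n =>
    rw [Finset.sum_range_succ']
    have h1 : f 0 ∘ₗ rightInvSeq 𝕜 e' f (n + 1 - 0) =
        -(∑ k ∈ Finset.range (n + 1), f (n + 1 - k) ∘ₗ rightInvSeq 𝕜 e' f k) := by
      show f 0 ∘ₗ rightInvSeq 𝕜 e' f (n + 1) = _
      rw [rightInvSeq]
      rw [Finset.sum_attach (Finset.range (n + 1))
        (fun k => f (n + 1 - k) ∘ₗ rightInvSeq 𝕜 e' f k)]
      rw [comp_neg, ← comp_assoc, h0, id_comp]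
    rw [h1]
    simp only [Nat.succ_sub_succ]
    rw [show (∑ k ∈ Finset.range (n + 1), f (n + 1 - k) ∘ₗ rightInvSeq 𝕜 e' f k) =
        ∑ k ∈ Finset.range (n + 1), f (k + 1) ∘ₗ rightInvSeq 𝕜 e' f (n - k) from ?_]
    · simp
    · rw [← Finset.sum_range_reflect (fun k => f (k + 1) ∘ₗ rightInvSeq 𝕜 e' f (n - k)) (n + 1)]
      apply Finset.sum_congr rfl
      intro k hk
      have hk' : k ≤ n := Nat.lt_succ_iff.mp (Finset.mem_range.mp hk)
      rw [show n + 1 - 1 - k = n - k by omega,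
        show n + 1 - k = (n - k) + 1 by omega, show n - (n - k) = k by omega]

lemma coeff_mk_mul_mk {A : Type} [AddCommGroup A] [Module 𝕜 A]
    (a b : ℕ → Module.End 𝕜 A) (n : ℕ) :
    (PowerSeries.coeff n) (PowerSeries.mk a * PowerSeries.mk b) =
      ∑ k ∈ Finset.range (n + 1), a k * b (n - k) := by
  rw [PowerSeries.coeff_mul, Finset.Nat.sum_antidiagonal_eq_sum_range_succ_mk]
  simp

end AuxInvert

/-- an `∞`-isomorphism of multicomplexes is invertible. -/
theorem inftyIsomorphism_invertible
    {A A' : Type} [AddCommGroup A] [Module 𝕜 A] [AddCommGroup A'] [Module 𝕜 A']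
    (𝒜 : ℤ → Submodule 𝕜 A) (𝒜' : ℤ → Submodule 𝕜 A')
    (h𝒜 : DirectSum.IsInternal 𝒜) (h𝒜' : DirectSum.IsInternal 𝒜')
    (Δ : ℕ → Module.End 𝕜 A) (Δ' : ℕ → Module.End 𝕜 A')
    (hΔ : IsMulticomplex 𝕜 𝒜 Δ) (hΔ' : IsMulticomplex 𝕜 𝒜' Δ')
    (f : ℕ → (A →ₗ[𝕜] A')) (hf : IsInftyMorphism 𝕜 𝒜 𝒜' Δ Δ' f)
    (hf0 : Function.Bijective (f 0)) :
    ∃ g : ℕ → (A' →ₗ[𝕜] A),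
      IsInftyMorphism 𝕜 𝒜' 𝒜 Δ' Δ g ∧
      g 0 ∘ₗ f 0 = LinearMap.id ∧
      f 0 ∘ₗ g 0 = LinearMap.id ∧
      (∀ n : ℕ, 1 ≤ n → ∑ k ∈ Finset.range (n + 1), g k ∘ₗ f (n - k) = 0) ∧
      (∀ n : ℕ, 1 ≤ n → ∑ k ∈ Finset.range (n + 1), f k ∘ₗ g (n - k) = 0) := by
  classical
  set e : A ≃ₗ[𝕜] A' := LinearEquiv.ofBijective (f 0) hf0 with he
  set e' : A' →ₗ[𝕜] A := e.symm.toLinearMap with he'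
  have hef : e' ∘ₗ f 0 = LinearMap.id := by
    ext x; simp [he', he]
  have hfe : f 0 ∘ₗ e' = LinearMap.id := by
    ext x
    simp only [coe_comp, Function.comp_apply, he', LinearEquiv.coe_coe, id_coe, id_eq]
    have : f 0 (e.symm x) = e (e.symm x) := rfl
    rw [this, e.apply_symm_apply]
  have hee' : (e : A →ₗ[𝕜] A') ∘ₗ e' = LinearMap.id := by
    ext x; simp [he']
  have he'e : e' ∘ₗ (e : A →ₗ[𝕜] A') = LinearMap.id := by
    ext x; simp [he']
  set g : ℕ → (A' →ₗ[𝕜] A) := leftInvSeq 𝕜 e' f with hg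
  set h : ℕ → (A' →ₗ[𝕜] A) := rightInvSeq 𝕜 e' f with hh
  have hgf : ∀ n, ∑ k ∈ Finset.range (n + 1), g k ∘ₗ f (n - k) =
      if n = 0 then LinearMap.id else 0 := leftInvSeq_spec 𝕜 e' f hef
  have hfh : ∀ n, ∑ k ∈ Finset.range (n + 1), f k ∘ₗ h (n - k) =
      if n = 0 then LinearMap.id else 0 := rightInvSeq_spec 𝕜 e' f hfe
  -- power series
  set Fs : PowerSeries (Module.End 𝕜 A) := PowerSeries.mk fun n => e' ∘ₗ f n with hFs
  set Gs : PowerSeries (Module.End 𝕜 A) :=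
    PowerSeries.mk fun n => g n ∘ₗ (e : A →ₗ[𝕜] A') with hGs
  set Hs : PowerSeries (Module.End 𝕜 A) :=
    PowerSeries.mk fun n => h n ∘ₗ (e : A →ₗ[𝕜] A') with hHs
  have hcoeff1 : ∀ n : ℕ, (PowerSeries.coeff (R := Module.End 𝕜 A) n) 1 =
      if n = 0 then LinearMap.id else 0 := by
    intro n
    rw [PowerSeries.coeff_one]
    split <;> rfl
  have hGF : Gs * Fs = 1 := by
    apply PowerSeries.ext; intro n
    rw [hGs, hFs, coeff_mk_mul_mk, hcoeff1]
    have : ∀ k ∈ Finset.range (n + 1),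
        (g k ∘ₗ (e : A →ₗ[𝕜] A')) * (e' ∘ₗ f (n - k)) = g k ∘ₗ f (n - k) := by
      intro k _
      ext x
      simp [he']
    rw [Finset.sum_congr rfl this, hgf n]
  have hFH : Fs * Hs = 1 := by
    apply PowerSeries.ext; intro n
    rw [hFs, hHs, coeff_mk_mul_mk, hcoeff1]
    have : ∀ k ∈ Finset.range (n + 1),
        (e' ∘ₗ f k) * (h (n - k) ∘ₗ (e : A →ₗ[𝕜] A')) =
          e' ∘ₗ (f k ∘ₗ h (n - k)) ∘ₗ (e : A →ₗ[𝕜] A') := by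
      intro k _
      ext x; simp [he']
    rw [Finset.sum_congr rfl this]
    have hsum : ∑ k ∈ Finset.range (n + 1),
        e' ∘ₗ (f k ∘ₗ h (n - k)) ∘ₗ (e : A →ₗ[𝕜] A') =
        e' ∘ₗ (∑ k ∈ Finset.range (n + 1), f k ∘ₗ h (n - k)) ∘ₗ (e : A →ₗ[𝕜] A') := by
      ext x; simp [LinearMap.sum_apply, map_sum]
    rw [hsum, hfh n]
    split
    · ext x; simp [he']
    · ext x; simp
  have hGH : Gs = Hs := by
    calc Gs = Gs * (Fs * Hs) := by rw [hFH, mul_one]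
    _ = (Gs * Fs) * Hs := by rw [mul_assoc]
    _ = Hs := by rw [hGF, one_mul]
  have hghn : ∀ n, g n = h n := by
    intro n
    have := congrArg (PowerSeries.coeff (R := Module.End 𝕜 A) n) hGH
    rw [hGs, hHs, PowerSeries.coeff_mk, PowerSeries.coeff_mk] at this
    ext y
    have := congrArg (fun φ : Module.End 𝕜 A => φ (e.symm y)) this
    simpa [he'] using this
  have hFG : Fs * Gs = 1 := by rw [hGH]; exact hFH
  -- (fg)_n = δ
  have hfg : ∀ n, ∑ k ∈ Finset.range (n + 1), f k ∘ₗ g (n - k) =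
      if n = 0 then LinearMap.id else 0 := by
    intro n
    rw [show (∀ k, g k = h k) → (∑ k ∈ Finset.range (n + 1), f k ∘ₗ g (n - k)) =
      ∑ k ∈ Finset.range (n + 1), f k ∘ₗ h (n - k) from fun hq => by simp [hq], hfh n]
    exact hghn
  -- infinity morphism relation
  set Ds : PowerSeries (Module.End 𝕜 A) := PowerSeries.mk Δ with hDs
  set D's : PowerSeries (Module.End 𝕜 A) :=
    PowerSeries.mk (fun n => e' ∘ₗ Δ' n ∘ₗ (e : A →ₗ[𝕜] A')) with hD's
  have hFD : Fs * Ds = D's * Fs := by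
    apply PowerSeries.ext; intro n
    rw [hFs, hDs, hD's, coeff_mk_mul_mk, coeff_mk_mul_mk]
    have h1 : ∀ k ∈ Finset.range (n + 1),
        (e' ∘ₗ f k) * Δ (n - k) = e' ∘ₗ (f k ∘ₗ Δ (n - k)) := by
      intro k _; ext x; simp
    have h2 : ∀ k ∈ Finset.range (n + 1),
        (e' ∘ₗ Δ' k ∘ₗ (e : A →ₗ[𝕜] A')) * (e' ∘ₗ f (n - k)) =
          e' ∘ₗ (Δ' k ∘ₗ f (n - k)) := by
      intro k _; ext x; simp [he']
    rw [Finset.sum_congr rfl h1, Finset.sum_congr rfl h2]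
    ext x
    have := congrArg (fun S : A →ₗ[𝕜] A' => e' (S x)) (hf.2 n)
    simpa [LinearMap.sum_apply, map_sum] using this
  have hGD : Gs * D's = Ds * Gs := by
    calc Gs * D's = Gs * D's * (Fs * Gs) := by rw [hFG, mul_one]
    _ = Gs * (D's * Fs) * Gs := by noncomm_ring
    _ = Gs * (Fs * Ds) * Gs := by rw [hFD]
    _ = (Gs * Fs) * (Ds * Gs) := by noncomm_ring
    _ = Ds * Gs := by rw [hGF, one_mul]
  have hgm : ∀ n, ∑ k ∈ Finset.range (n + 1), g k ∘ₗ Δ' (n - k) =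
      ∑ k ∈ Finset.range (n + 1), Δ k ∘ₗ g (n - k) := by
    intro n
    have := congrArg (PowerSeries.coeff (R := Module.End 𝕜 A) n) hGD
    rw [hGs, hDs, hD's, coeff_mk_mul_mk, coeff_mk_mul_mk] at this
    have h1 : ∀ k ∈ Finset.range (n + 1),
        (g k ∘ₗ (e : A →ₗ[𝕜] A')) * (e' ∘ₗ Δ' (n - k) ∘ₗ (e : A →ₗ[𝕜] A')) =
          (g k ∘ₗ Δ' (n - k)) ∘ₗ (e : A →ₗ[𝕜] A') := by
      intro k _; ext x; simp [he']
    have h2 : ∀ k ∈ Finset.range (n + 1),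
        Δ k * (g (n - k) ∘ₗ (e : A →ₗ[𝕜] A')) =
          (Δ k ∘ₗ g (n - k)) ∘ₗ (e : A →ₗ[𝕜] A') := by
      intro k _; ext x; simp
    rw [Finset.sum_congr rfl h1, Finset.sum_congr rfl h2] at this
    ext y
    have h3 := congrArg (fun φ : Module.End 𝕜 A => φ (e.symm y)) this
    simpa [LinearMap.sum_apply, he'] using h3
  -- degrees
  have hf0mem : ∀ i : ℤ, ∀ x ∈ 𝒜 i, f 0 x ∈ 𝒜' i := by
    intro i x hx
    have := hf.1 0 i (Submodule.mem_map_of_mem hx)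
    simpa using this
  have hdeg0 : ∀ (j : ℤ) (y : A'), y ∈ 𝒜' j → e.symm y ∈ 𝒜 j := by
    intro j y hy
    refine mem_graded_of_map_mem 𝕜 h𝒜 h𝒜' (f 0) hf0.1 hf0mem (j := j) ?_
    have hy' : f 0 (e.symm y) = y := by
      have := congrArg (fun φ : A' →ₗ[𝕜] A' => φ y) hfe
      simpa [he'] using this
    rw [hy']; exact hy
  have hfmem : ∀ (n : ℕ) (j : ℤ) (x : A), x ∈ 𝒜 j → f n x ∈ 𝒜' (j + 2 * n) :=
    fun n j x hx => hf.1 n j (Submodule.mem_map_of_mem hx)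
  have hgdeg : ∀ (n : ℕ) (j : ℤ) (y : A'), y ∈ 𝒜' j → g n y ∈ 𝒜 (j + 2 * n) := by
    intro n
    induction n using Nat.strong_induction_on with
    | _ n ih =>
      match n with
      | 0 =>
        intro j y hy
        have hg0 : g 0 = e' := by rw [hg, leftInvSeq]
        rw [hg0]
        simpa [he'] using hdeg0 j y hy
      | (m + 1) =>
        intro j y hy
        have hgrec : g (m + 1) =
            -((∑ k ∈ (Finset.range (m + 1)).attach,
                g (k : ℕ) ∘ₗ f (m + 1 - (k : ℕ))) ∘ₗ e') := by
          rw [hg, leftInvSeq]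
        rw [hgrec]
        simp only [LinearMap.neg_apply, coe_comp, Function.comp_apply, LinearMap.sum_apply]
        apply Submodule.neg_mem
        apply Submodule.sum_mem
        intro k hk
        have hk' : (k : ℕ) ≤ m := Finset.mem_range_succ_iff.mp k.2
        have h1 : e' y ∈ 𝒜 j := by simpa [he'] using hdeg0 j y hy
        have h2 := hfmem (m + 1 - (k : ℕ)) j _ h1
        have h3 := ih (k : ℕ) (Nat.lt_succ_of_le hk') _ _ h2
        convert h3 using 2
        omega
  refine ⟨g, ⟨⟨?_, hgm⟩, ?_, ?_, ?_, ?_⟩⟩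
  · intro n j z hz
    obtain ⟨y, hy, rfl⟩ := Submodule.mem_map.mp hz
    exact hgdeg n j y hy
  · simpa using hgf 0
  · simpa using hfg 0
  · intro n hn
    have := hgf n
    rwa [if_neg (by omega)] at this
  · intro n hn
    have := hfg n
    rwa [if_neg (by omega)] at this
end

section
/- Let (H, 0, Δ′_1, Δ′_2, …) be a minimal multicomplex (i.e. Δ′_0 = 0). Then there exists an ∞-isotopy from the trivial multicomplex (H, 0, 0, 0, …) to (H, 0, Δ′_1, Δ′_2, …) if and only if Δ′_n = 0 for all n ≥ 1. -/
open Module LinearMap Finset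

variable (𝕜 : Type) [Field 𝕜] [CharZero 𝕜]

/-- for a minimal multicomplex `(H, 0, Δ'_1, Δ'_2, …)`, there is an `∞`-isotopy
from the trivial multicomplex `(H, 0, 0, 0, …)` to `(H, 0, Δ'_1, Δ'_2, …)` if and only if
`Δ'_n = 0` for all `n ≥ 1`. -/
theorem minimal_inftyIsotopy_iff_trivial
    {H : Type} [AddCommGroup H] [Module 𝕜 H]
    (ℋ : ℤ → Submodule 𝕜 H) (hℋ : DirectSum.IsInternal ℋ)
    (Δ' : ℕ → Module.End 𝕜 H) (hΔ' : IsMulticomplex 𝕜 ℋ Δ')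
    (hmin : Δ' 0 = 0) :
    (∃ f : ℕ → Module.End 𝕜 H,
      (∀ n : ℕ, HasDeg 𝕜 ℋ ℋ (f n) (2 * (n : ℤ))) ∧
      f 0 = LinearMap.id ∧
      (∀ n : ℕ, ∑ k ∈ Finset.range (n + 1), Δ' k ∘ₗ f (n - k) = 0))
    ↔
    (∀ n : ℕ, 1 ≤ n → Δ' n = 0) := by
  constructor
  · rintro ⟨f, hdeg, hf0, heq⟩ n
    induction n using Nat.strong_induction_on with
    | _ n ih =>
      intro hn
      have h := heq n
      rw [Finset.sum_range_succ] at h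
      have hrest : ∑ k ∈ Finset.range n, Δ' k ∘ₗ f (n - k) = 0 := by
        apply Finset.sum_eq_zero
        intro k hk
        rcases Nat.eq_zero_or_pos k with h0 | h1
        · simp [h0, hmin]
        · rw [ih k (Finset.mem_range.mp hk) h1]; simp
      rw [hrest, zero_add] at h
      simpa [hf0] using h
  · intro hz
    refine ⟨fun n => if n = 0 then LinearMap.id else 0, ?_, by simp, ?_⟩
    · intro n j
      by_cases hn : n = 0
      · simp [hn, Submodule.map_id]
      · simp [hn]
    · intro n
      apply Finset.sum_eq_zero
      intro k hk
      rcases Nat.eq_zero_or_pos k with h0 | h1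
      · simp [h0, hmin]
      · rw [hz k h1]; simp
end
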